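/- arXiv:2509.17600 — 5 statements merged into one kernel-verified Lean document; each statement's English description precedes it below -/
import Mathlib

section
/- Let f : [T₀,∞) → (0,∞) be C³, positive, strictly increasing, with log f' concave on [T₀,∞), and let μ be a probability measure on ℝ. Define G(x) = f⁻¹(∫_ℝ f(x + |y|) dμ(y)), assuming G(x) < ∞ for all x ≥ T₀ and the integrals are well-defined. Then G'(x) ≤ 1 for all x ≥ T₀. -/
/-!
Log-concavity of `f'` makes the ratio `f'(t + h) / f'(t)` decreasing in `t`. Hence, with
`λ = f'(g + h) / f'(g)`, the function `t ↦ f(t + h) - λ f(t)` increases up to `g` and decreases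
after it, i.e. `u ↦ f(f⁻¹(u) + h)` lies below its tangent line at `u = f(g)`. Integrating this
tangent inequality at `g = G(x)` is Jensen's inequality and gives `f(G(x + h)) ≤ f(G(x) + h)`, so
`G(x + h) ≤ G(x) + h` for `h ≥ 0`, and the right difference quotients of `G` are at most `1`.
-/

open Set MeasureTheory Filter Topology

theorem ConcaveOn.sub_le_sub_of_le {s : Set ℝ} {L : ℝ → ℝ} (hL : ConcaveOn ℝ s L)
    {a b h : ℝ} (ha : a ∈ s) (hbh : b + h ∈ s) (hab : a ≤ b) (hh : 0 ≤ h) :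
    L (b + h) - L b ≤ L (a + h) - L a := by
  rcases (show a ≤ b + h by linarith).eq_or_lt with heq | hlt
  · obtain rfl : h = 0 := by linarith
    obtain rfl : b = a := by linarith
    rfl
  have hd : 0 < b + h - a := by linarith
  set θ := (b - a) / (b + h - a)
  have hθ0 : 0 ≤ θ := div_nonneg (by linarith) hd.le
  have hθ1 : θ ≤ 1 := (div_le_one hd).mpr (by linarith)
  -- `b` and `a + h` are the convex combinations of `a` and `b + h` with swapped weights.
  have hb : (1 - θ) • a + θ • (b + h) = b := by
    simp only [θ, smul_eq_mul]; field_simp; ring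
  have hah : θ • a + (1 - θ) • (b + h) = a + h := by
    simp only [θ, smul_eq_mul]; field_simp; ring
  have h₁ := hL.2 ha hbh (show 0 ≤ 1 - θ by linarith) hθ0 (sub_add_cancel 1 θ)
  have h₂ := hL.2 ha hbh hθ0 (show 0 ≤ 1 - θ by linarith) (add_sub_cancel θ 1)
  rw [hb] at h₁
  rw [hah] at h₂
  simp only [smul_eq_mul] at h₁ h₂
  linarith

theorem div_le_div_of_concaveOn_log {s : Set ℝ} {p : ℝ → ℝ} (hp : ∀ t ∈ s, 0 < p t)
    (hlog : ConcaveOn ℝ s (fun t => Real.log (p t)))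
    {a b h : ℝ} (ha : a ∈ s) (hbh : b + h ∈ s) (hab : a ≤ b) (hh : 0 ≤ h) :
    p (b + h) / p b ≤ p (a + h) / p a := by
  have hs := hlog.1.ordConnected
  have hb : b ∈ s := hs.out ha hbh ⟨hab, by linarith⟩
  have hah : a + h ∈ s := hs.out ha hbh ⟨by linarith, by linarith⟩
  rw [← Real.log_le_log_iff (div_pos (hp _ hbh) (hp _ hb)) (div_pos (hp _ hah) (hp _ ha)),
    Real.log_div (hp _ hbh).ne' (hp _ hb).ne', Real.log_div (hp _ hah).ne' (hp _ ha).ne']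
  exact hlog.sub_le_sub_of_le ha hbh hab hh

theorem isMaxOn_Ici_of_deriv_nonneg_of_deriv_nonpos {D : ℝ → ℝ} {T₀ g : ℝ} (hg : T₀ ≤ g)
    (hcont : ContinuousOn D (Ici T₀)) (hdiff : DifferentiableOn ℝ D (Ioi T₀))
    (hleft : ∀ s ∈ Ioo T₀ g, 0 ≤ deriv D s) (hright : ∀ s ∈ Ioi g, deriv D s ≤ 0) :
    IsMaxOn D (Ici T₀) g := by
  intro t (ht : T₀ ≤ t)
  rcases le_total t g with htg | hgt
  · have hmono : MonotoneOn D (Icc T₀ g) := by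
      refine monotoneOn_of_deriv_nonneg (convex_Icc _ _) (hcont.mono Icc_subset_Ici_self)
        ?_ (by rwa [interior_Icc])
      rw [interior_Icc]
      exact hdiff.mono Ioo_subset_Ioi_self
    exact hmono ⟨ht, htg⟩ ⟨hg, le_rfl⟩ htg
  · have hanti : AntitoneOn D (Ici g) := by
      refine antitoneOn_of_deriv_nonpos (convex_Ici _) (hcont.mono (Ici_subset_Ici.mpr hg))
        ?_ (by rwa [interior_Ici])
      rw [interior_Ici]
      exact hdiff.mono (Ioi_subset_Ioi hg)
    exact hanti self_mem_Ici hgt hgt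

section LogConcaveDerivative

variable {f : ℝ → ℝ} {T₀ : ℝ} (hcont : ContinuousOn f (Ici T₀))
  (hdiff : DifferentiableOn ℝ f (Ioi T₀)) (hderiv_pos : ∀ x ≥ T₀, 0 < deriv f x)
  (hlog : ConcaveOn ℝ (Ici T₀) (fun t => Real.log (deriv f t)))
include hcont hdiff hderiv_pos hlog

theorem shift_sub_mul_le_of_concaveOn_log_deriv {g h t : ℝ} (hg : T₀ ≤ g) (hh : 0 ≤ h)
    (ht : T₀ ≤ t) :
    f (t + h) - deriv f (g + h) / deriv f g * f t ≤
      f (g + h) - deriv f (g + h) / deriv f g * f g := by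
  set c := deriv f (g + h) / deriv f g
  have hderiv : ∀ s > T₀, HasDerivAt (fun t => f (t + h) - c * f t)
      (deriv f (s + h) - c * deriv f s) s := fun s hs =>
    ((hdiff.differentiableAt (Ioi_mem_nhds (by linarith : T₀ < s + h))).hasDerivAt.comp_add_const
      s h).sub ((hdiff.differentiableAt (Ioi_mem_nhds hs)).hasDerivAt.const_mul c)
  have hpos : ∀ s ∈ Ici T₀, 0 < deriv f s := hderiv_pos
  refine isMaxOn_Ici_of_deriv_nonneg_of_deriv_nonpos hg ?_
    (fun s hs => (hderiv s hs).differentiableAt.differentiableWithinAt) ?_ ?_ ht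
  · exact (hcont.comp (continuous_add_const h).continuousOn
      fun s (hs : T₀ ≤ s) => show T₀ ≤ s + h by linarith).sub (hcont.const_smul c)
  · intro s ⟨hTs, hsg⟩
    rw [(hderiv s hTs).deriv, sub_nonneg, ← le_div_iff₀ (hpos s hTs.le)]
    exact div_le_div_of_concaveOn_log hpos hlog hTs.le (show T₀ ≤ g + h by linarith) hsg.le hh
  · intro s (hgs : g < s)
    have hTs : T₀ < s := hg.trans_lt hgs
    rw [(hderiv s hTs).deriv, sub_nonpos, ← div_le_iff₀ (hpos s hTs.le)]
    exact div_le_div_of_concaveOn_log hpos hlog hg (show T₀ ≤ s + h by linarith) hgs.le hh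

theorem integral_comp_add_le_of_concaveOn_log_deriv {α : Type*} [MeasurableSpace α]
    {μ : Measure α} [IsProbabilityMeasure μ] {X : α → ℝ} (hX : ∀ y, T₀ ≤ X y)
    {h : ℝ} (hh : 0 ≤ h) (hfX : Integrable (fun y => f (X y)) μ)
    (hfXh : Integrable (fun y => f (X y + h)) μ) {g : ℝ} (hg : T₀ ≤ g)
    (hfg : f g = ∫ y, f (X y) ∂μ) :
    ∫ y, f (X y + h) ∂μ ≤ f (g + h) := by
  set c := deriv f (g + h) / deriv f g
  have htangent : ∀ y, f (X y + h) ≤ (f (g + h) - c * f g) + c * f (X y) := fun y => by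
    linarith [shift_sub_mul_le_of_concaveOn_log_deriv hcont hdiff hderiv_pos hlog hg hh (hX y)]
  calc ∫ y, f (X y + h) ∂μ
      ≤ ∫ y, (f (g + h) - c * f g) + c * f (X y) ∂μ :=
        integral_mono hfXh ((integrable_const _).add (hfX.const_mul c)) htangent
    _ = f (g + h) := by
        rw [integral_add (integrable_const _) (hfX.const_mul c), integral_const_mul,
          integral_const, probReal_univ, one_smul, ← hfg]
        ring

end LogConcaveDerivative

theorem deriv_le_of_forall_add_le {G : ℝ → ℝ} {x C : ℝ} (hC : 0 ≤ C)
    (hG : ∀ h > 0, G (x + h) ≤ G x + C * h) : deriv G x ≤ C := by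
  by_cases hGx : DifferentiableAt ℝ G x
  · refine le_of_tendsto hGx.hasDerivAt.tendsto_slope_zero_right ?_
    filter_upwards [self_mem_nhdsWithin] with h (hh : 0 < h)
    rw [smul_eq_mul, inv_mul_le_iff₀ hh]
    linarith [hG h hh]
  · rwa [deriv_zero_of_not_differentiableAt hGx]

theorem G_deriv_le_one_general
    (T₀ : ℝ) (f finv G : ℝ → ℝ) (μ : Measure ℝ) [IsProbabilityMeasure μ]
    (hC3 : ContDiffOn ℝ 3 f (Ici T₀))
    (hmono : StrictMonoOn f (Ici T₀))
    (hderiv_pos : ∀ x ≥ T₀, 0 < deriv f x)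
    (hlogconc : ConcaveOn ℝ (Ici T₀) (fun t => Real.log (deriv f t)))
    (hinv_right : ∀ t ∈ f '' (Ici T₀), f (finv t) = t ∧ finv t ∈ Ici T₀)
    (hint : ∀ x ≥ T₀, Integrable (fun y => f (x + |y|)) μ)
    (hGdef : ∀ x ≥ T₀, G x = finv (∫ y, f (x + |y|) ∂μ))
    (hrange : ∀ x ≥ T₀, (∫ y, f (x + |y|) ∂μ) ∈ f '' (Ici T₀)) :
    ∀ x ≥ T₀, deriv G x ≤ 1 := by
  intro x hx
  have hdiff : DifferentiableOn ℝ f (Ioi T₀) :=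
    (hC3.differentiableOn (by norm_num)).mono Ioi_subset_Ici_self
  refine deriv_le_of_forall_add_le zero_le_one fun h hh => ?_
  have hxh : T₀ ≤ x + h := by linarith
  obtain ⟨hfG, hGT⟩ := hinv_right _ (hrange x hx)
  obtain ⟨hfGh, hGhT⟩ := hinv_right _ (hrange (x + h) hxh)
  rw [hGdef x hx, hGdef (x + h) hxh, one_mul,
    ← hmono.le_iff_le hGhT (show T₀ ≤ finv _ + h by linarith [mem_Ici.mp hGT]), hfGh]
  have hshift : ∀ y, x + h + |y| = x + |y| + h := fun y => by ring
  simp only [hshift]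
  exact integral_comp_add_le_of_concaveOn_log_deriv hC3.continuousOn hdiff hderiv_pos hlogconc
    (fun y => le_add_of_le_of_nonneg hx (abs_nonneg y)) hh.le (hint x hx)
    (by simpa only [hshift] using hint (x + h) hxh) hGT hfG

theorem G_deriv_le_one
    (T₀ : ℝ) (f finv G : ℝ → ℝ) (μ : Measure ℝ) [IsProbabilityMeasure μ]
    (hC3 : ContDiffOn ℝ 3 f (Ici T₀))
    (hpos : ∀ x ≥ T₀, 0 < f x)
    (hmono : StrictMonoOn f (Ici T₀))
    (hderiv_pos : ∀ x ≥ T₀, 0 < deriv f x)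
    (hlogconc : ConcaveOn ℝ (Ici T₀) (fun t => Real.log (deriv f t)))
    (hinv_left : ∀ x ≥ T₀, finv (f x) = x)
    (hinv_right : ∀ t ∈ f '' (Ici T₀), f (finv t) = t ∧ finv t ∈ Ici T₀)
    (hint : ∀ x ≥ T₀, Integrable (fun y => f (x + |y|)) μ)
    (hint' : ∀ x ≥ T₀, Integrable (fun y => deriv f (x + |y|)) μ)
    (hGdef : ∀ x ≥ T₀, G x = finv (∫ y, f (x + |y|) ∂μ))
    (hrange : ∀ x ≥ T₀, (∫ y, f (x + |y|) ∂μ) ∈ f '' (Ici T₀)) :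
    ∀ x ≥ T₀, deriv G x ≤ 1 :=
  G_deriv_le_one_general T₀ f finv G μ hC3 hmono hderiv_pos hlogconc hinv_right hint hGdef hrange
end

section
/- Let g ∈ L²([a,b]) be continuously differentiable on [a,b] with g(a) = g(b) = 0 (or more weakly, let g vanish at at least one point of [a,b]). If g vanishes at both endpoints a and b, then ∫_a^b |g(ξ)|² dξ ≤ ((b−a)/π)² ∫_a^b |g'(ξ)|² dξ. -/
/-!
Put `k = π / (b - a)`. On `(a, b)` the function `c x = k cot (k (x - a))` solves the Riccati
equation `c' = -(c² + k²)`, so Picone's identity `(c g²)' = g'² - k² g² - (g' - c g)²` gives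
`(c g²)' ≤ g'² - k² g²`. Integrating over `[a, b]` proves the inequality, because `c g²` tends
to `0` at both endpoints: `c` blows up only like `1 / (x - a)` resp. `1 / (x - b)`, while `g²`
vanishes to second order there.
-/

open MeasureTheory intervalIntegral Set Filter Topology Asymptotics

namespace Real

theorem cot_add_pi (x : ℝ) : cot (x + π) = cot x := by
  simp only [cot_eq_cos_div_sin, cos_add_pi, sin_add_pi, neg_div_neg_eq]

theorem hasDerivAt_cot {x : ℝ} (hx : sin x ≠ 0) : HasDerivAt cot (-(1 + cot x ^ 2)) x := by
  have h : HasDerivAt (fun x => cos x / sin x) _ x := (hasDerivAt_cos x).div (hasDerivAt_sin x) hx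
  rw [show cot = fun x => cos x / sin x from funext cot_eq_cos_div_sin]
  refine h.congr_deriv ?_
  field_simp
  ring

/-- At `t = 0` this holds through the junk values `cot 0 = 0⁻¹ = 0`. -/
theorem isBigO_cot_inv : cot =O[𝓝 0] fun t => t⁻¹ := by
  refine IsBigO.of_bound (π / 2) ?_
  filter_upwards [Metric.closedBall_mem_nhds (0 : ℝ) (by positivity : 0 < π / 2)] with t ht
  rw [mem_closedBall_zero_iff, norm_eq_abs] at ht
  rw [norm_eq_abs, norm_eq_abs, cot_eq_cos_div_sin, abs_div, abs_inv]
  rcases eq_or_ne t 0 with rfl | ht0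
  · simp
  have hsin : 2 / π * |t| ≤ |sin t| := by
    rw [abs_sin_eq_sin_abs_of_abs_le_pi (by linarith [pi_pos])]
    exact mul_le_sin (abs_nonneg t) ht
  calc |cos t| / |sin t| ≤ 1 / (2 / π * |t|) :=
        div_le_div₀ zero_le_one (abs_cos_le_one t) (by positivity) hsin
    _ = π / 2 * |t|⁻¹ := by field_simp

end Real

open Real

theorem continuousWithinAt_cot_mul_sq {g : ℝ → ℝ} {s : Set ℝ} {x₀ : ℝ}
    (hg : DifferentiableWithinAt ℝ g s x₀) (hx₀ : g x₀ = 0) (k : ℝ) :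
    ContinuousWithinAt (fun x => cot (k * (x - x₀)) * g x ^ 2) s x₀ := by
  have hsub : Tendsto (fun x => x - x₀) (𝓝[s] x₀) (𝓝 0) :=
    tendsto_nhdsWithin_of_tendsto_nhds (by simpa using (continuous_sub_right x₀).tendsto x₀)
  have hcot : (fun x => cot (k * (x - x₀))) =O[𝓝[s] x₀] fun x => (x - x₀)⁻¹ := by
    refine (isBigO_cot_inv.comp_tendsto (by simpa using hsub.const_mul k)).trans ?_
    simpa only [Function.comp_def, mul_inv] using isBigO_const_mul_self k⁻¹ _ _
  have hsq : (fun x => g x ^ 2) =O[𝓝[s] x₀] fun x => (x - x₀) ^ 2 := by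
    simpa [hx₀] using hg.isBigO_sub.pow 2
  have hlin : Tendsto (fun x => (x - x₀)⁻¹ * (x - x₀) ^ 2) (𝓝[s] x₀) (𝓝 0) := by
    simpa only [sq, ← mul_assoc, inv_mul_mul_self] using hsub
  simpa [ContinuousWithinAt, hx₀] using (hcot.mul hsq).trans_tendsto hlin

theorem integral_sq_le_of_riccati {a b k : ℝ} {g g' c : ℝ → ℝ} (hab : a ≤ b)
    (hg : ∀ x ∈ Ioo a b, HasDerivAt g (g' x) x)
    (hc : ∀ x ∈ Ioo a b, HasDerivAt c (-(c x ^ 2 + k ^ 2)) x)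
    (hcg : ContinuousOn (fun x => c x * g x ^ 2) (Icc a b))
    (hg2 : IntervalIntegrable (fun x => g x ^ 2) volume a b)
    (hg'2 : IntervalIntegrable (fun x => g' x ^ 2) volume a b) :
    c b * g b ^ 2 - c a * g a ^ 2 + k ^ 2 * ∫ x in a..b, g x ^ 2 ≤ ∫ x in a..b, g' x ^ 2 := by
  have hderiv : ∀ x ∈ Ioo a b, HasDerivAt (fun x => c x * g x ^ 2)
      (g' x ^ 2 - k ^ 2 * g x ^ 2 - (g' x - c x * g x) ^ 2) x := fun x hx =>
    ((hc x hx).mul ((hg x hx).pow 2)).congr_deriv (by simp only [Pi.pow_apply]; ring)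
  have h := sub_le_integral_of_hasDeriv_right_of_le hab hcg
    (fun x hx => (hderiv x hx).hasDerivWithinAt)
    ((intervalIntegrable_iff_integrableOn_Icc_of_le hab).1 (hg'2.sub (hg2.const_mul (k ^ 2))))
    (fun x _ => sub_le_self _ (sq_nonneg _))
  rw [integral_sub hg'2 (hg2.const_mul _), intervalIntegral.integral_const_mul] at h
  linarith

theorem hasDerivAt_mul_cot_mul_sub {k a x : ℝ} (hx : sin (k * (x - a)) ≠ 0) :
    HasDerivAt (fun x => k * cot (k * (x - a))) (-((k * cot (k * (x - a))) ^ 2 + k ^ 2)) x := by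
  have hlin : HasDerivAt (fun x => k * (x - a)) k x := by
    simpa using ((hasDerivAt_id x).sub_const a).const_mul k
  refine (((hasDerivAt_cot hx).comp x hlin).const_mul k).congr_deriv ?_
  ring

theorem sin_pi_div_mul_sub_pos {a b x : ℝ} (hx : x ∈ Ioo a b) :
    0 < sin (π / (b - a) * (x - a)) := by
  have hba : 0 < b - a := sub_pos.2 (hx.1.trans hx.2)
  refine sin_pos_of_pos_of_lt_pi (mul_pos (div_pos pi_pos hba) (sub_pos.2 hx.1)) ?_
  calc π / (b - a) * (x - a) < π / (b - a) * (b - a) := by gcongr; exact hx.2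
    _ = π := div_mul_cancel₀ _ hba.ne'

theorem continuousOn_cot_pi_div_mul_sq {a b : ℝ} {g : ℝ → ℝ} (hab : a < b)
    (hg : DifferentiableOn ℝ g (Icc a b)) (ha : g a = 0) (hb : g b = 0) :
    ContinuousOn (fun x => cot (π / (b - a) * (x - a)) * g x ^ 2) (Icc a b) := by
  have hright :
      ContinuousWithinAt (fun x => cot (π / (b - a) * (x - a)) * g x ^ 2) (Icc a b) b := by
    have hshift : ∀ x, π / (b - a) * (x - a) = π / (b - a) * (x - b) + π := fun x => by
      linear_combination div_mul_cancel₀ π (sub_pos.2 hab).ne'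
    simpa only [hshift, cot_add_pi] using
      continuousWithinAt_cot_mul_sq (hg b (right_mem_Icc.2 hab.le)) hb (π / (b - a))
  intro x hx
  rcases hx.1.eq_or_lt with rfl | hax
  · exact continuousWithinAt_cot_mul_sq (hg _ hx) ha _
  rcases hx.2.eq_or_lt with rfl | hxb
  · exact hright
  have hcot : ContinuousAt (fun x => cot (π / (b - a) * (x - a))) x :=
    (hasDerivAt_cot (sin_pi_div_mul_sub_pos ⟨hax, hxb⟩).ne').continuousAt.comp
      (f := fun x => π / (b - a) * (x - a)) (by fun_prop)
  have hgx := (hg x hx).differentiableAt (Icc_mem_nhds hax hxb)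
  exact (hcot.mul (hgx.continuousAt.pow 2)).continuousWithinAt

theorem poincare_wirtinger
    (a b : ℝ) (hab : a < b) (g : ℝ → ℝ)
    (hC1 : ContDiffOn ℝ 1 g (Icc a b))
    (ha : g a = 0) (hb : g b = 0) :
    ∫ ξ in a..b, (g ξ) ^ 2 ≤ ((b - a) / Real.pi) ^ 2 * ∫ ξ in a..b, (deriv g ξ) ^ 2 := by
  set k := π / (b - a) with hk
  set f := derivWithin g (Icc a b)
  have hdiff : DifferentiableOn ℝ g (Icc a b) := hC1.differentiableOn one_ne_zero
  have hf : ContinuousOn f (Icc a b) := hC1.continuousOn_derivWithin (uniqueDiffOn_Icc hab) le_rfl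
  have hderiv : ∀ x ∈ Ioo a b, HasDerivAt g (f x) x := fun x hx =>
    (hdiff x (Ioo_subset_Icc_self hx)).hasDerivWithinAt.hasDerivAt (Icc_mem_nhds hx.1 hx.2)
  have hkey := integral_sq_le_of_riccati hab.le hderiv
    (fun x hx => hasDerivAt_mul_cot_mul_sub (sin_pi_div_mul_sub_pos hx).ne')
    (by simpa only [mul_assoc] using (continuousOn_cot_pi_div_mul_sq hab hdiff ha hb).const_mul k)
    ((hdiff.continuousOn.pow 2).intervalIntegrable_of_Icc hab.le)
    ((hf.pow 2).intervalIntegrable_of_Icc hab.le)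
  have hderiv_sq : ∫ ξ in a..b, deriv g ξ ^ 2 = ∫ ξ in a..b, f ξ ^ 2 :=
    integral_congr_Ioo_of_le hab.le fun x hx => by rw [(hderiv x hx).deriv]
  rw [ha, hb] at hkey
  rw [hderiv_sq, show ((b - a) / π) ^ 2 = (k ^ 2)⁻¹ by rw [hk, div_pow, div_pow, inv_div],
    inv_mul_eq_div, le_div_iff₀ (by positivity)]
  linarith
end

section
/- Let S(t) = 2π·e^{4π t^s} with 0 < s < 1, so S⁻¹(t) = ((1/(4π))·log(t/(2π)))^{1/s} for t ≥ 2π. Define, for large j, λ̃_j = ((log j)/(4π) − ((1−s)/(4πs))·log((log j)/(4π)) + (log s)/(4π))^{1/s} − d̃ and μ̃_j = (j/2)·(4π/log j)^{1/s} − d for constants d, d̃ ≥ 0. Then λ̃_j ~ ((log j)/(4π))^{1/s} and μ̃_j ~ (j/2)·(4π/log j)^{1/s} as j → ∞, and for sufficiently large j, S(λ̃_j + d̃)·(λ̃_{j+1} − λ̃_j) ≤ 1/2 and S⁻¹(μ̃_j + d)·(μ̃_{j+1} − μ̃_j) ≤ 1/2. -/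
/-!
Write `L x = log x / (4π)` and `p = 1/s`. The base of `λ̃` is `L - (p - 1)/(4π) · log L + O(1)`,
so it is `L (1 + o(1))`, and `μ̃ + d = x / (2 L^p)` tends to infinity since `L^p = o(x)`; this
gives both asymptotics. The base `b` of `λ̃` is tuned so that `exp (4π b(x)) = s x L(x)^(1-p)`,
while Bernoulli's inequality and `b(x+1) ≤ L(x)` bound the increment of `λ̃` by
`p L^(p-1) (b(x+1) - b(x)) ≤ p L^(p-1) / (4π x)`: the product is exactly `1/2`. For `μ̃` the
increment is at most `1 / (2 L^p)` because `L` increases, and `S⁻¹(μ̃_x + d) = L(x / (4π L^p))^p`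
is at most `L^p`.
-/

open Real Filter Topology

theorem Real.rpow_sub_rpow_le_mul_rpow_sub_one {a b p : ℝ} (ha : 0 ≤ a) (hb : 0 < b)
    (hp : 1 ≤ p) : b ^ p - a ^ p ≤ p * b ^ (p - 1) * (b - a) := by
  have bernoulli := one_add_mul_self_le_rpow_one_add
    (show -1 ≤ a / b - 1 by linarith [div_nonneg ha hb.le]) hp
  rw [add_sub_cancel, div_rpow ha hb.le, le_div_iff₀ (rpow_pos_of_pos hb p)] at bernoulli
  have hbp : b ^ p = b ^ (p - 1) * b := by rw [← rpow_add_one hb.ne', sub_add_cancel]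
  have expand : (1 + p * (a / b - 1)) * b ^ p = b ^ p - p * b ^ (p - 1) * (b - a) := by
    rw [hbp]; field_simp; ring
  linarith

theorem Filter.Tendsto.sub_const_div {α : Type*} {l : Filter α} {f g : α → ℝ}
    (hfg : Tendsto (fun x => f x / g x) l (𝓝 1)) (hg : Tendsto g l atTop) (c : ℝ) :
    Tendsto (fun x => (f x - c) / g x) l (𝓝 1) := by
  simpa [sub_div, div_eq_mul_inv c] using hfg.sub (hg.inv_tendsto_atTop.const_mul c)

/- In the paper's notation `λ̃_x = lambdaBase s x ^ (1/s) - d̃`, `μ̃_x = muBase (1/s) x - d` and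
`S⁻¹ t = logScale (t / (2π)) ^ (1/s)`. -/

noncomputable section

def logScale (x : ℝ) : ℝ := log x / (4 * π)

def lambdaBase (s x : ℝ) : ℝ :=
  logScale x - (1 - s) / (4 * π * s) * log (logScale x) + log s / (4 * π)

def muBase (p x : ℝ) : ℝ := x / 2 * (4 * π / log x) ^ p

end

theorem logScale_pos {x : ℝ} (hx : 1 < x) : 0 < logScale x :=
  div_pos (log_pos hx) (by positivity)

theorem logScale_le_logScale {x y : ℝ} (hx : 0 < x) (hxy : x ≤ y) : logScale x ≤ logScale y :=
  div_le_div_of_nonneg_right (log_le_log hx hxy) (by positivity)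

theorem tendsto_logScale_atTop : Tendsto logScale atTop atTop :=
  tendsto_log_atTop.atTop_div_const (by positivity)

theorem logScale_add_one_sub_le {x : ℝ} (hx : 0 < x) :
    logScale (x + 1) - logScale x ≤ 1 / (4 * π * x) := by
  have hlog : log ((x + 1) / x) ≤ (x + 1) / x - 1 := log_le_sub_one_of_pos (by positivity)
  rw [log_div (by positivity) hx.ne'] at hlog
  have : (x + 1) / x - 1 = 1 / x := by field_simp; ring
  rw [logScale, logScale, ← sub_div, div_le_iff₀ (by positivity)]
  calc log (x + 1) - log x ≤ 1 / x := by linarith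
    _ = 1 / (4 * π * x) * (4 * π) := by field_simp

theorem four_pi_mul_lambdaBase {s x : ℝ} (hs : 0 < s) :
    4 * π * lambdaBase s x = log x + log s - (1 / s - 1) * log (logScale x) := by
  unfold lambdaBase logScale
  field_simp
  ring

theorem exp_four_pi_mul_lambdaBase {s x : ℝ} (hs : 0 < s) (hx : 1 < x) :
    exp (4 * π * lambdaBase s x) = x * s / logScale x ^ (1 / s - 1) := by
  rw [four_pi_mul_lambdaBase hs, exp_sub, exp_add, exp_log (by linarith), exp_log hs,
    rpow_def_of_pos (logScale_pos hx), mul_comm (log (logScale x))]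

theorem lambdaBase_add_one_sub_le {s x : ℝ} (hs0 : 0 < s) (hs1 : s < 1) (hx : 1 < x) :
    lambdaBase s (x + 1) - lambdaBase s x ≤ 1 / (4 * π * x) := by
  have hc : 0 ≤ (1 - s) / (4 * π * s) := div_nonneg (by linarith) (by positivity)
  have hlog : log (logScale x) ≤ log (logScale (x + 1)) :=
    log_le_log (logScale_pos hx) (logScale_le_logScale (by linarith) (by linarith))
  have := logScale_add_one_sub_le (show 0 < x by linarith)
  unfold lambdaBase
  nlinarith [mul_le_mul_of_nonneg_left hlog hc]

theorem tendsto_lambdaBase_div_logScale (s : ℝ) :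
    Tendsto (fun x => lambdaBase s x / logScale x) atTop (𝓝 1) := by
  have hlog : Tendsto (fun x => log (logScale x) / logScale x) atTop (𝓝 0) :=
    isLittleO_log_id_atTop.tendsto_div_nhds_zero.comp tendsto_logScale_atTop
  have hcomb := (tendsto_const_nhds (x := (1 : ℝ))).sub (hlog.const_mul ((1 - s) / (4 * π * s)))
    |>.add (tendsto_logScale_atTop.inv_tendsto_atTop.const_mul (log s / (4 * π)))
  refine Tendsto.congr' ?_ (by simpa using hcomb)
  filter_upwards [tendsto_logScale_atTop.eventually_gt_atTop 0] with x hx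
  unfold lambdaBase
  field_simp

theorem eventually_lambdaBase_nonneg (s : ℝ) : ∀ᶠ x in atTop, 0 ≤ lambdaBase s x := by
  filter_upwards [(tendsto_lambdaBase_div_logScale s).eventually (eventually_gt_nhds one_pos),
    tendsto_logScale_atTop.eventually_gt_atTop 0] with x hratio hL
  exact (div_pos_iff_of_pos_right hL).mp hratio |>.le

theorem eventually_lambdaBase_add_one_le_logScale {s : ℝ} (hs0 : 0 < s) (hs1 : s < 1) :
    ∀ᶠ x in atTop, lambdaBase s (x + 1) ≤ logScale x := by
  have hc : 0 < (1 - s) / (4 * π * s) := div_pos (by linarith) (by positivity)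
  have hlogL : Tendsto (fun x => (1 - s) / (4 * π * s) * log (logScale (x + 1))) atTop atTop :=
    (tendsto_log_atTop.comp (tendsto_logScale_atTop.comp
      (tendsto_atTop_add_const_right _ 1 tendsto_id))).const_mul_atTop hc
  filter_upwards [eventually_ge_atTop 1, hlogL.eventually_ge_atTop (1 / (4 * π))] with x hx hcL
  have hstep := logScale_add_one_sub_le (show 0 < x by linarith)
  have hstep' : 1 / (4 * π * x) ≤ 1 / (4 * π) :=
    one_div_le_one_div_of_le (by positivity) (le_mul_of_one_le_right (by positivity) hx)
  have hlogs : log s / (4 * π) ≤ 0 := div_nonpos_of_nonpos_of_nonneg (log_nonpos hs0.le hs1.le)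
    (by positivity)
  unfold lambdaBase
  linarith

theorem two_pi_mul_exp_mul_rpow_sub_rpow_le {s x : ℝ} (hs0 : 0 < s) (hs1 : s < 1) (hx : 1 < x)
    (hA : 0 ≤ lambdaBase s x) (hA' : 0 ≤ lambdaBase s (x + 1))
    (hA'L : lambdaBase s (x + 1) ≤ logScale x) :
    2 * π * exp (4 * π * (lambdaBase s x ^ (1 / s)) ^ s) *
      (lambdaBase s (x + 1) ^ (1 / s) - lambdaBase s x ^ (1 / s)) ≤ 1 / 2 := by
  set A := lambdaBase s x
  set A' := lambdaBase s (x + 1)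
  set L := logScale x
  have hp : 1 ≤ 1 / s := by rw [le_div_iff₀ hs0]; linarith
  have hL : 0 < L := logScale_pos hx
  have hS : 2 * π * exp (4 * π * (A ^ (1 / s)) ^ s) = 2 * π * (x * s / L ^ (1 / s - 1)) := by
    rw [one_div, rpow_inv_rpow hA hs0.ne', ← one_div, exp_four_pi_mul_lambdaBase hs0 hx]
  rcases le_or_gt A' A with hA'A | hAA'
  · have : A' ^ (1 / s) ≤ A ^ (1 / s) := rpow_le_rpow hA' hA'A (by positivity)
    nlinarith [mul_nonneg (by positivity : (0:ℝ) ≤ 2 * π) (exp_pos (4 * π * (A ^ (1 / s)) ^ s)).le]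
  have hmean : A' ^ (1 / s) - A ^ (1 / s) ≤ 1 / s * L ^ (1 / s - 1) * (1 / (4 * π * x)) :=
    calc A' ^ (1 / s) - A ^ (1 / s) ≤ 1 / s * A' ^ (1 / s - 1) * (A' - A) :=
          rpow_sub_rpow_le_mul_rpow_sub_one hA (by linarith) hp
      _ ≤ 1 / s * L ^ (1 / s - 1) * (1 / (4 * π * x)) := by
          gcongr
          exact lambdaBase_add_one_sub_le hs0 hs1 hx
  calc 2 * π * exp (4 * π * (A ^ (1 / s)) ^ s) * (A' ^ (1 / s) - A ^ (1 / s))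
      ≤ 2 * π * (x * s / L ^ (1 / s - 1)) * (1 / s * L ^ (1 / s - 1) * (1 / (4 * π * x))) := by
        rw [hS]; gcongr
    _ = 1 / 2 := by
        have : 0 < L ^ (1 / s - 1) := rpow_pos_of_pos hL _
        field_simp
        ring

theorem eventually_two_pi_mul_exp_mul_rpow_sub_rpow_le {s : ℝ} (hs0 : 0 < s) (hs1 : s < 1) :
    ∀ᶠ x in atTop, 2 * π * exp (4 * π * (lambdaBase s x ^ (1 / s)) ^ s) *
      (lambdaBase s (x + 1) ^ (1 / s) - lambdaBase s x ^ (1 / s)) ≤ 1 / 2 := by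
  filter_upwards [eventually_gt_atTop 1, eventually_lambdaBase_nonneg s,
    (tendsto_atTop_add_const_right _ 1 tendsto_id).eventually (eventually_lambdaBase_nonneg s),
    eventually_lambdaBase_add_one_le_logScale hs0 hs1] with x hx hA hA' hA'L
  exact two_pi_mul_exp_mul_rpow_sub_rpow_le hs0 hs1 hx hA hA' hA'L

theorem tendsto_lambdaBase_rpow_div_logScale_rpow (s p : ℝ) :
    Tendsto (fun x => lambdaBase s x ^ p / logScale x ^ p) atTop (𝓝 1) := by
  have hratio := (tendsto_lambdaBase_div_logScale s).rpow_const (p := p) (Or.inl one_ne_zero)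
  refine Tendsto.congr' ?_ (by simpa using hratio)
  filter_upwards [eventually_lambdaBase_nonneg s, eventually_gt_atTop 1] with x hA hx
  exact div_rpow hA (logScale_pos hx).le p

theorem muBase_eq {p x : ℝ} (hx : 1 < x) : muBase p x = x / (2 * logScale x ^ p) := by
  have hinv : 4 * π / log x = (logScale x)⁻¹ := (inv_div _ _).symm
  rw [muBase, hinv, inv_rpow (logScale_pos hx).le]
  field_simp

theorem tendsto_logScale_rpow_div_atTop (p : ℝ) :
    Tendsto (fun x => logScale x ^ p / x) atTop (𝓝 0) := by
  have hlo := (isLittleO_log_rpow_rpow_atTop p one_pos).tendsto_div_nhds_zero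
  refine Tendsto.congr' ?_ (by simpa using hlo.const_mul ((4 * π) ^ p)⁻¹)
  filter_upwards [eventually_ge_atTop 1] with x hx
  rw [logScale, div_rpow (log_nonneg hx) (by positivity)]
  ring

theorem tendsto_muBase_atTop (p : ℝ) : Tendsto (muBase p) atTop atTop := by
  have hpos : ∀ᶠ x in atTop, 0 < 2 * (logScale x ^ p / x) := by
    filter_upwards [eventually_gt_atTop 1] with x hx
    have := rpow_pos_of_pos (logScale_pos hx) p
    positivity
  have h := tendsto_nhdsWithin_iff.mpr
    ⟨by simpa using (tendsto_logScale_rpow_div_atTop p).const_mul 2, hpos⟩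
  refine h.inv_tendsto_nhdsGT_zero.congr' ?_
  filter_upwards [eventually_gt_atTop 1] with x hx
  rw [Pi.inv_apply, muBase_eq hx]
  field_simp

theorem muBase_add_one_sub_le {p x : ℝ} (hp : 0 ≤ p) (hx : 1 < x) :
    muBase p (x + 1) - muBase p x ≤ 1 / (2 * logScale x ^ p) := by
  have hL := rpow_pos_of_pos (logScale_pos hx) p
  have hLL : logScale x ^ p ≤ logScale (x + 1) ^ p :=
    rpow_le_rpow (logScale_pos hx).le (logScale_le_logScale (by linarith) (by linarith)) hp
  rw [muBase_eq hx, muBase_eq (by linarith)]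
  calc (x + 1) / (2 * logScale (x + 1) ^ p) - x / (2 * logScale x ^ p)
      ≤ (x + 1) / (2 * logScale x ^ p) - x / (2 * logScale x ^ p) := by gcongr
    _ = 1 / (2 * logScale x ^ p) := by ring

theorem logScale_muBase_div_two_pi_mem {p x : ℝ} (hp : 0 ≤ p) (hx : 1 < x)
    (hL : 1 ≤ logScale x) (hLx : 4 * π * logScale x ^ p ≤ x) :
    logScale (muBase p x / (2 * π)) ∈ Set.Icc 0 (logScale x) := by
  have hLp : 1 ≤ logScale x ^ p := one_le_rpow hL hp
  have hy : muBase p x / (2 * π) = x / (4 * π * logScale x ^ p) := by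
    rw [muBase_eq hx]; field_simp; ring
  have h4π : 1 ≤ 4 * π := by linarith [pi_gt_three]
  rw [hy]
  constructor
  · exact div_nonneg (log_nonneg ((one_le_div (by positivity)).mpr hLx)) (by positivity)
  · refine logScale_le_logScale (by positivity) (div_le_self (by linarith) ?_)
    nlinarith

theorem eventually_rpow_logScale_mul_muBase_sub_le {p : ℝ} (hp : 0 ≤ p) :
    ∀ᶠ x in atTop, logScale (muBase p x / (2 * π)) ^ p * (muBase p (x + 1) - muBase p x) ≤ 1 / 2 := by
  have hratio := (tendsto_logScale_rpow_div_atTop p).eventually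
    (eventually_le_nhds (show (0 : ℝ) < 1 / (4 * π) by positivity))
  filter_upwards [eventually_gt_atTop 1, tendsto_logScale_atTop.eventually_ge_atTop 1, hratio]
    with x hx hL hratio
  have hLx : 4 * π * logScale x ^ p ≤ x := by
    rw [div_le_div_iff₀ (by linarith) (by positivity)] at hratio
    linarith
  obtain ⟨hy0, hyL⟩ := logScale_muBase_div_two_pi_mem hp hx hL hLx
  have hLp := rpow_pos_of_pos (logScale_pos hx) p
  calc logScale (muBase p x / (2 * π)) ^ p * (muBase p (x + 1) - muBase p x)
      ≤ logScale (muBase p x / (2 * π)) ^ p * (1 / (2 * logScale x ^ p)) :=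
        mul_le_mul_of_nonneg_left (muBase_add_one_sub_le hp hx) (rpow_nonneg hy0 p)
    _ ≤ logScale x ^ p * (1 / (2 * logScale x ^ p)) := by gcongr
    _ = 1 / 2 := by field_simp

theorem asymmetric_sequences_properties_general
    (s : ℝ) (hs0 : 0 < s) (hs1 : s < 1) (d dt : ℝ)
    (S Sinv lam mu : ℝ → ℝ)
    (hS : ∀ t, S t = 2 * π * Real.exp (4 * π * t ^ s))
    (hSinv : ∀ t, Sinv t = (1 / (4 * π) * Real.log (t / (2 * π))) ^ (1 / s))
    (hlam : ∀ j : ℝ, lam j =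
      (Real.log j / (4 * π) - (1 - s) / (4 * π * s) * Real.log (Real.log j / (4 * π)) +
        Real.log s / (4 * π)) ^ (1 / s) - dt)
    (hmu : ∀ j : ℝ, mu j = j / 2 * (4 * π / Real.log j) ^ (1 / s) - d) :
    Tendsto (fun j : ℕ => lam j / ((Real.log j / (4 * π)) ^ (1 / s))) atTop (nhds 1) ∧
    Tendsto (fun j : ℕ => mu j / ((j : ℝ) / 2 * (4 * π / Real.log j) ^ (1 / s)))
      atTop (nhds 1) ∧
    ∃ J : ℕ, ∀ j : ℕ, J ≤ j →
      S (lam j + dt) * (lam (j + 1) - lam j) ≤ 1 / 2 ∧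
      Sinv (mu j + d) * (mu (j + 1) - mu j) ≤ 1 / 2 := by
  obtain rfl : S = fun t => 2 * π * exp (4 * π * t ^ s) := funext hS
  obtain rfl : Sinv = fun t => logScale (t / (2 * π)) ^ (1 / s) := by
    funext t; rw [hSinv, logScale, one_div_mul_eq_div]
  obtain rfl : lam = fun x => lambdaBase s x ^ (1 / s) - dt := funext hlam
  obtain rfl : mu = fun x => muBase (1 / s) x - d := funext hmu
  have hp : 0 < 1 / s := by positivity
  have hmuBase := tendsto_muBase_atTop (1 / s)
  refine ⟨?_, ?_, ?_⟩
  · exact ((tendsto_lambdaBase_rpow_div_logScale_rpow s (1 / s)).sub_const_div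
      ((tendsto_rpow_atTop hp).comp tendsto_logScale_atTop) dt).comp tendsto_natCast_atTop_atTop
  · have hself : Tendsto (fun x => muBase (1 / s) x / muBase (1 / s) x) atTop (𝓝 1) :=
      tendsto_const_nhds.congr' <| (hmuBase.eventually_ne_atTop 0).mono fun x hx => (div_self hx).symm
    exact (hself.sub_const_div hmuBase d).comp tendsto_natCast_atTop_atTop
  · have hev := tendsto_natCast_atTop_atTop.eventually
      ((eventually_two_pi_mul_exp_mul_rpow_sub_rpow_le hs0 hs1).and
        (eventually_rpow_logScale_mul_muBase_sub_le hp.le))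
    obtain ⟨J, hJ⟩ := eventually_atTop.mp hev
    refine ⟨J, fun j hj => ?_⟩
    simpa only [sub_add_cancel, sub_sub_sub_cancel_right] using hJ j hj

theorem asymmetric_sequences_properties
    (s : ℝ) (hs0 : 0 < s) (hs1 : s < 1) (d dt : ℝ) (hd : 0 ≤ d) (hdt : 0 ≤ dt)
    (S Sinv lam mu : ℝ → ℝ)
    (hS : ∀ t, S t = 2 * π * Real.exp (4 * π * t ^ s))
    (hSinv : ∀ t, Sinv t = (1 / (4 * π) * Real.log (t / (2 * π))) ^ (1 / s))
    (hlam : ∀ j : ℝ, lam j =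
      (Real.log j / (4 * π) - (1 - s) / (4 * π * s) * Real.log (Real.log j / (4 * π)) +
        Real.log s / (4 * π)) ^ (1 / s) - dt)
    (hmu : ∀ j : ℝ, mu j = j / 2 * (4 * π / Real.log j) ^ (1 / s) - d) :
    Tendsto (fun j : ℕ => lam j / ((Real.log j / (4 * π)) ^ (1 / s))) atTop (nhds 1) ∧
    Tendsto (fun j : ℕ => mu j / ((j : ℝ) / 2 * (4 * π / Real.log j) ^ (1 / s)))
      atTop (nhds 1) ∧
    ∃ J : ℕ, ∀ j : ℕ, J ≤ j →
      S (lam j + dt) * (lam (j + 1) - lam j) ≤ 1 / 2 ∧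
      Sinv (mu j + d) * (mu (j + 1) - mu j) ≤ 1 / 2 :=
  asymmetric_sequences_properties_general s hs0 hs1 d dt S Sinv lam mu hS hSinv hlam hmu
end

section
/- Let S : [0,∞) → [0,∞) be unbounded, continuously differentiable, strictly increasing with S(0)=0, let α > 0, and let Λ = (λ_j) and M = (μ_j) be strictly increasing doubly infinite real sequences tending to ±∞ satisfying lim_{j→±∞} S(|λ_j|)(λ_{j+1}−λ_j) = α and lim_{j→±∞} S⁻¹(|μ_j|)(μ_{j+1}−μ_j) = α. Then inf_{W,T ≥ K} (|Λ∩[−T,T]| + |M∩[−W,W]|)/(4WT) → 1/(2α) as K → ∞. -/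
/-!
Truncate at height `W`. On a tail of `Λ` the gaps satisfy `S(λ_j) (λ_{j+1} - λ_j) ≈ α`, and they
are bounded by some `G`, because `S` is bounded below by a positive constant there. Comparing
`∑ (λ_{j+1} - λ_j) min(S(λ_j), W)` with upper and lower Riemann sums of `∫ min(S, W)`, the error
telescopes to at most `G W`. Hence `α |Λ ∩ [-T, T]| ≥ 2 ∫₀^T min(S, W) - O(W)`, with the reverse
inequality up to `O(W + 1)` when `S(T) ≤ W`; likewise for `M`, with `S⁻¹` and `T`, `W` exchanged.
Slicing the rectangle `[0, T] × [0, W]` along the graph of `S` gives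
`∫₀^T min(S, W) + ∫₀^W min(S⁻¹, T) = W T`, so `α (|Λ ∩ [-T, T]| + |M ∩ [-W, W]|)` is at least
`2 W T - O(W + T)` for all `W, T`, and at most `2 W T + O(W + T)` when `W = S(T)`.
-/

open Set Filter MeasureTheory Topology

section RiemannSum

open Finset

theorem Monotone.sub_mul_le_intervalIntegral {f : ℝ → ℝ} (hf : Monotone f) {a b : ℝ} (hab : a ≤ b) :
    (b - a) * f a ≤ ∫ t in a..b, f t := by
  simpa [mul_comm] using intervalIntegral.integral_mono_on hab intervalIntegrable_const
    (hf.intervalIntegrable (μ := volume)) (fun t ht => hf ht.1)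

theorem Monotone.intervalIntegral_le_sub_mul {f : ℝ → ℝ} (hf : Monotone f) {a b : ℝ} (hab : a ≤ b) :
    ∫ t in a..b, f t ≤ (b - a) * f b := by
  simpa [mul_comm] using intervalIntegral.integral_mono_on hab (hf.intervalIntegrable (μ := volume))
    intervalIntegrable_const (fun t ht => hf ht.2)

theorem Monotone.sum_sub_mul_le_intervalIntegral {f : ℝ → ℝ} (hf : Monotone f) {u : ℕ → ℝ}
    (hu : Monotone u) (n : ℕ) :
    ∑ k ∈ range n, (u (k + 1) - u k) * f (u k) ≤ ∫ t in u 0..u n, f t := by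
  rw [← intervalIntegral.sum_integral_adjacent_intervals fun k _ =>
    hf.intervalIntegrable (μ := volume)]
  exact sum_le_sum fun k _ => hf.sub_mul_le_intervalIntegral (hu k.le_succ)

theorem Monotone.intervalIntegral_le_sum_sub_mul {f : ℝ → ℝ} (hf : Monotone f) {u : ℕ → ℝ}
    (hu : Monotone u) (n : ℕ) :
    ∫ t in u 0..u n, f t ≤ ∑ k ∈ range n, (u (k + 1) - u k) * f (u (k + 1)) := by
  rw [← intervalIntegral.sum_integral_adjacent_intervals fun k _ =>
    hf.intervalIntegrable (μ := volume)]
  exact sum_le_sum fun k _ => hf.intervalIntegral_le_sub_mul (hu k.le_succ)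

theorem Monotone.sum_sub_mul_succ_le {f : ℝ → ℝ} (hf : Monotone f) {u : ℕ → ℝ} (hu : Monotone u) {G : ℝ}
    (hG : ∀ k, u (k + 1) - u k ≤ G) (n : ℕ) :
    ∑ k ∈ range n, (u (k + 1) - u k) * f (u (k + 1)) ≤
      ∑ k ∈ range n, (u (k + 1) - u k) * f (u k) + G * (f (u n) - f (u 0)) := by
  rw [← sum_range_sub (fun k => f (u k)), mul_sum, ← sum_add_distrib]
  refine sum_le_sum fun k _ => ?_
  have := mul_le_mul_of_nonneg_right (hG k) (sub_nonneg.2 (hf (hu k.le_succ)))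
  linarith

end RiemannSum

section OneSided

open Finset

variable {f : ℝ → ℝ} {u : ℕ → ℝ} {α₁ α₂ : ℝ}

theorem sub_le_div_of_mul_sub_le (hf : Monotone f) (hu : Monotone u)
    (hgap : ∀ k, f (u k) * (u (k + 1) - u k) ≤ α₂) (hpos : 0 < f (u 0)) (k : ℕ) :
    u (k + 1) - u k ≤ α₂ / f (u 0) := by
  rw [le_div_iff₀ hpos]
  calc (u (k + 1) - u k) * f (u 0) ≤ (u (k + 1) - u k) * f (u k) :=
        mul_le_mul_of_nonneg_left (hf (hu k.zero_le)) (sub_nonneg.2 (hu k.le_succ))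
    _ ≤ α₂ := by linarith [hgap k]

theorem intervalIntegral_min_le_of_mul_sub_le (hf : Monotone f) (hf₀ : ∀ t, 0 ≤ f t)
    (hu : Monotone u) (hgap : ∀ k, f (u k) * (u (k + 1) - u k) ≤ α₂) (hpos : 0 < f (u 0))
    (hu₀ : 0 ≤ u 0) {n : ℕ} {T W : ℝ} (hT₀ : 0 ≤ T) (hT : T ≤ u (n + 1)) (hW : 0 ≤ W) :
    ∫ t in (0 : ℝ)..T, min (f t) W ≤ α₂ * (n + 1) + W * (u 0 + α₂ / f (u 0)) := by
  set φ : ℝ → ℝ := fun t => min (f t) W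
  have hφ : Monotone φ := hf.min monotone_const
  have hφW : ∀ t, φ t ≤ W := fun t => min_le_right _ _
  have hφ₀ : ∀ t, 0 ≤ φ t := fun t => le_min (hf₀ t) hW
  have hint : ∀ a b, IntervalIntegrable φ volume a b := fun _ _ => hφ.intervalIntegrable
  have hsum : ∑ k ∈ range (n + 1), (u (k + 1) - u k) * φ (u k) ≤ α₂ * (n + 1) := by
    calc _ ≤ ∑ _k ∈ range (n + 1), α₂ := sum_le_sum fun k _ => by
          nlinarith [hgap k, min_le_left (f (u k)) W, sub_nonneg.2 (hu k.le_succ)]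
      _ = α₂ * (n + 1) := by simp [mul_comm]
  calc ∫ t in (0 : ℝ)..T, φ t ≤ ∫ t in (0 : ℝ)..u (n + 1), φ t :=
        intervalIntegral.integral_mono_interval le_rfl hT₀ hT
          (Eventually.of_forall hφ₀) (hint _ _)
    _ = (∫ t in (0 : ℝ)..u 0, φ t) + ∫ t in u 0..u (n + 1), φ t :=
        (intervalIntegral.integral_add_adjacent_intervals (hint _ _) (hint _ _)).symm
    _ ≤ u 0 * W + (∑ k ∈ range (n + 1), (u (k + 1) - u k) * φ (u k)
          + α₂ / f (u 0) * (φ (u (n + 1)) - φ (u 0))) := by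
        gcongr
        · simpa using intervalIntegral.integral_mono_on hu₀ (hint _ _) intervalIntegrable_const
            fun t _ => hφW t
        · exact (hφ.intervalIntegral_le_sum_sub_mul hu _).trans
            (hφ.sum_sub_mul_succ_le hu (sub_le_div_of_mul_sub_le hf hu hgap hpos) _)
    _ ≤ α₂ * (n + 1) + W * (u 0 + α₂ / f (u 0)) := by
        have hG := (sub_nonneg.2 (hu (Nat.zero_le 1))).trans
          (sub_le_div_of_mul_sub_le hf hu hgap hpos 0)
        have hΔ : φ (u (n + 1)) - φ (u 0) ≤ W := by linarith [hφW (u (n + 1)), hφ₀ (u 0)]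
        linarith [hsum, mul_le_mul_of_nonneg_left hΔ hG]

theorem mul_le_intervalIntegral_min_of_le_mul_sub (hf : Monotone f) (hf₀ : ∀ t, 0 ≤ f t)
    (hu : Monotone u) (hgap : ∀ k, f (u k) * (u (k + 1) - u k) ≤ α₂)
    (hgap₁ : ∀ k, α₁ ≤ f (u (k + 1)) * (u (k + 1) - u k)) (hpos : 0 < f (u 0))
    (hu₀ : 0 ≤ u 0) {n : ℕ} {T W : ℝ} (hT : u n ≤ T) (hfT : f T ≤ W) (hW : 0 ≤ W) :
    α₁ * n ≤ (∫ t in (0 : ℝ)..T, min (f t) W) + W * (α₂ / f (u 0)) := by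
  set φ : ℝ → ℝ := fun t => min (f t) W
  have hφ : Monotone φ := hf.min monotone_const
  have hφW : ∀ t, φ t ≤ W := fun t => min_le_right _ _
  have hφ₀ : ∀ t, 0 ≤ φ t := fun t => le_min (hf₀ t) hW
  have hG := (sub_nonneg.2 (hu (Nat.zero_le 1))).trans
    (sub_le_div_of_mul_sub_le hf hu hgap hpos 0)
  have hsum : α₁ * n ≤ ∑ k ∈ range n, (u (k + 1) - u k) * φ (u (k + 1)) := by
    calc α₁ * n = ∑ _k ∈ range n, α₁ := by simp [mul_comm]
      _ ≤ _ := sum_le_sum fun k hk => by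
          have : f (u (k + 1)) ≤ W := (hf ((hu (mem_range.1 hk)).trans hT)).trans hfT
          simpa [φ, min_eq_left this, mul_comm] using hgap₁ k
  calc α₁ * n ≤ ∑ k ∈ range n, (u (k + 1) - u k) * φ (u k)
        + α₂ / f (u 0) * (φ (u n) - φ (u 0)) :=
        hsum.trans (hφ.sum_sub_mul_succ_le hu (sub_le_div_of_mul_sub_le hf hu hgap hpos) _)
    _ ≤ (∫ t in u 0..u n, φ t) + W * (α₂ / f (u 0)) := by
        gcongr ?_ + ?_
        · exact hφ.sum_sub_mul_le_intervalIntegral hu n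
        · have hΔ : φ (u n) - φ (u 0) ≤ W := by linarith [hφW (u n), hφ₀ (u 0)]
          linarith [mul_le_mul_of_nonneg_left hΔ hG]
    _ ≤ (∫ t in (0 : ℝ)..T, φ t) + W * (α₂ / f (u 0)) := by
        gcongr
        exact intervalIntegral.integral_mono_interval hu₀ (hu n.zero_le) hT (.of_forall hφ₀)
          hφ.intervalIntegrable

end OneSided

theorem exists_le_and_lt_succ_of_tendsto {u : ℕ → ℝ} (hu : Tendsto u atTop atTop) {T : ℝ}
    (h₀ : u 0 ≤ T) : ∃ n, u n ≤ T ∧ T < u (n + 1) := by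
  by_contra! h
  obtain ⟨n, hn⟩ := (hu.eventually_gt_atTop T).exists
  exact (Nat.rec h₀ (fun n ih => h n ih) n : u n ≤ T).not_gt hn

theorem StrictMono.natCard_setOf_mem_Icc {Λ : ℤ → ℝ} (hΛ : StrictMono Λ) {a b : ℤ} {T : ℝ}
    (hab : a ≤ b + 1) (ha : -T ≤ Λ a) (ha' : Λ (a - 1) < -T) (hb : Λ b ≤ T)
    (hb' : T < Λ (b + 1)) :
    (Nat.card {j | Λ j ∈ Icc (-T) T} : ℝ) = b - a + 1 := by
  have : {j | Λ j ∈ Icc (-T) T} = Icc a b := by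
    ext j
    simp only [mem_ofPred_eq, mem_Icc]
    constructor
    · rintro ⟨hj₁, hj₂⟩
      constructor
      · by_contra! hj
        exact (hΛ.monotone (show j ≤ a - 1 by omega)).not_gt (ha'.trans_le hj₁)
      · by_contra! hj
        exact (hΛ.monotone (show b + 1 ≤ j by omega)).not_gt (hj₂.trans_lt hb')
    · rintro ⟨hj₁, hj₂⟩
      exact ⟨ha.trans (hΛ.monotone hj₁), (hΛ.monotone hj₂).trans hb⟩
  rw [this, Nat.card_coe_set_eq, ← Finset.coe_Icc, ncard_coe_finset, Int.card_Icc]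
  rw [← Int.cast_natCast, Int.toNat_of_nonneg (by omega)]
  push_cast
  ring

theorem exists_tail_bounds {f : ℝ → ℝ} (hf : Monotone f) (hf₀ : ∀ t, 0 ≤ f t) {x : ℤ → ℝ}
    (hx : Monotone x) (htop : Tendsto x atTop atTop) {α₁ α₂ : ℝ} (hα₁ : 0 < α₁)
    (hgap : ∀ᶠ j in atTop, ∃ y ∈ Icc (x j) (x (j + 1)),
      α₁ ≤ f y * (x (j + 1) - x j) ∧ f y * (x (j + 1) - x j) ≤ α₂) :
    ∃ J : ℤ, ∃ C : ℝ, 0 < x J ∧ ∀ T ≥ x J, ∀ W ≥ 0, ∃ n : ℕ,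
      x (J + n) ≤ T ∧ T < x (J + n + 1) ∧
      (∫ t in (0 : ℝ)..T, min (f t) W) ≤ α₂ * (n + 1) + C * W ∧
      (f T ≤ W → α₁ * n ≤ (∫ t in (0 : ℝ)..T, min (f t) W) + C * W) := by
  obtain ⟨J₀, hJ₀⟩ := eventually_atTop.1 (hgap.and (htop.eventually_gt_atTop 0))
  have hbounds : ∀ j ≥ J₀, f (x j) * (x (j + 1) - x j) ≤ α₂ ∧
      α₁ ≤ f (x (j + 1)) * (x (j + 1) - x j) := fun j hj => by
    obtain ⟨⟨y, hy, hy₁, hy₂⟩, -⟩ := hJ₀ j hj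
    have hd : 0 ≤ x (j + 1) - x j := sub_nonneg.2 (hx (by omega))
    exact ⟨(mul_le_mul_of_nonneg_right (hf hy.1) hd).trans hy₂,
      hy₁.trans (mul_le_mul_of_nonneg_right (hf hy.2) hd)⟩
  -- the gap just before `J` forces `f` to be positive from `x J` on
  have hpos : 0 < f (x (J₀ + 1)) :=
    pos_of_mul_pos_left (hα₁.trans_le (hbounds J₀ le_rfl).2) (sub_nonneg.2 (hx (by omega)))
  set J := J₀ + 1
  set u : ℕ → ℝ := fun k => x (J + k)
  have hu_succ : ∀ k : ℕ, u (k + 1) = x (J + k + 1) := fun k => by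
    simp only [u]; push_cast; ring_nf
  have hu₀ : u 0 = x J := by simp [u]
  have hu : Monotone u := fun k l hkl => hx (by omega)
  have hu_top : Tendsto u atTop atTop :=
    htop.comp (tendsto_atTop_add_const_left _ _ tendsto_natCast_atTop_atTop)
  have hgap₂ : ∀ k, f (u k) * (u (k + 1) - u k) ≤ α₂ := fun k => by
    simpa [hu_succ] using (hbounds (J + k) (by omega)).1
  have hgap₁ : ∀ k, α₁ ≤ f (u (k + 1)) * (u (k + 1) - u k) := fun k => by
    simpa [hu_succ] using (hbounds (J + k) (by omega)).2
  have hxJ : 0 < x J := (hJ₀ J (by omega)).2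
  refine ⟨J, u 0 + α₂ / f (u 0), hxJ, fun T hT W hW => ?_⟩
  rw [← hu₀] at hT hpos hxJ
  obtain ⟨n, hn, hn'⟩ := exists_le_and_lt_succ_of_tendsto hu_top hT
  refine ⟨n, hn, hu_succ n ▸ hn', ?_, fun hfT => ?_⟩
  · linarith [intervalIntegral_min_le_of_mul_sub_le hf hf₀ hu hgap₂ hpos hxJ.le
      (hxJ.le.trans hT) hn'.le hW]
  · linarith [mul_le_intervalIntegral_min_of_le_mul_sub hf hf₀ hu hgap₂ hgap₁ hpos hxJ.le hn
      hfT hW, mul_nonneg hxJ.le hW]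

section TwoSided

variable {f : ℝ → ℝ} {Λ : ℤ → ℝ} {α α₁ α₂ : ℝ}

theorem exists_upper_tail_bounds (hf : Monotone f) (hf₀ : ∀ t, 0 ≤ f t) (hΛ : Monotone Λ)
    (htop : Tendsto Λ atTop atTop) (hα₁ : 0 < α₁) (h₁ : α₁ < α) (h₂ : α < α₂)
    (hgap : Tendsto (fun j => f |Λ j| * (Λ (j + 1) - Λ j)) atTop (𝓝 α)) :
    ∃ J : ℤ, ∃ C : ℝ, 0 < Λ J ∧ ∀ T ≥ Λ J, ∀ W ≥ 0, ∃ n : ℕ,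
      Λ (J + n) ≤ T ∧ T < Λ (J + n + 1) ∧
      (∫ t in (0 : ℝ)..T, min (f t) W) ≤ α₂ * (n + 1) + C * W ∧
      (f T ≤ W → α₁ * n ≤ (∫ t in (0 : ℝ)..T, min (f t) W) + C * W) := by
  refine exists_tail_bounds hf hf₀ hΛ htop hα₁ ?_
  filter_upwards [hgap (Icc_mem_nhds h₁ h₂), htop.eventually_ge_atTop 0] with j hj hj₀
  rw [mem_preimage, abs_of_nonneg hj₀] at hj
  exact ⟨Λ j, ⟨le_rfl, hΛ (by omega)⟩, hj⟩

theorem exists_lower_tail_bounds (hf : Monotone f) (hf₀ : ∀ t, 0 ≤ f t) (hΛ : Monotone Λ)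
    (hbot : Tendsto Λ atBot atBot) (hα₁ : 0 < α₁) (h₁ : α₁ < α) (h₂ : α < α₂)
    (hgap : Tendsto (fun j => f |Λ j| * (Λ (j + 1) - Λ j)) atBot (𝓝 α)) :
    ∃ J : ℤ, ∃ C : ℝ, Λ J < 0 ∧ ∀ T ≥ -Λ J, ∀ W ≥ 0, ∃ n : ℕ,
      -T ≤ Λ (J - n) ∧ Λ (J - n - 1) < -T ∧
      (∫ t in (0 : ℝ)..T, min (f t) W) ≤ α₂ * (n + 1) + C * W ∧
      (f T ≤ W → α₁ * n ≤ (∫ t in (0 : ℝ)..T, min (f t) W) + C * W) := by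
  have hΛ' : Monotone fun j => -Λ (-j) := fun a b h => neg_le_neg (hΛ (neg_le_neg h))
  have htop' : Tendsto (fun j => -Λ (-j)) atTop atTop :=
    tendsto_neg_atBot_atTop.comp (hbot.comp tendsto_neg_atTop_atBot)
  have hgap' : ∀ᶠ j in atTop, ∃ y ∈ Icc (-Λ (-j)) (-Λ (-(j + 1))),
      α₁ ≤ f y * (-Λ (-(j + 1)) - -Λ (-j)) ∧ f y * (-Λ (-(j + 1)) - -Λ (-j)) ≤ α₂ := by
    -- the gap of the reflected sequence at `j` is the gap of `Λ` at `-(j + 1)`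
    have hshift : Tendsto (fun j : ℤ => -(j + 1)) atTop atBot :=
      tendsto_neg_atTop_atBot.comp (tendsto_atTop_add_const_right _ 1 tendsto_id)
    filter_upwards [hshift.eventually (hgap (Icc_mem_nhds h₁ h₂)),
      hshift.eventually (hbot.eventually_le_atBot 0)] with j hj hj₀
    rw [abs_of_nonpos hj₀, show -(j + 1) + 1 = -j by ring] at hj
    refine ⟨-Λ (-(j + 1)), ⟨neg_le_neg (hΛ (by omega)), le_rfl⟩, ?_⟩
    rwa [show -Λ (-(j + 1)) - -Λ (-j) = Λ (-j) - Λ (-(j + 1)) by ring]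
  obtain ⟨J, C, hJ, hC⟩ := exists_tail_bounds hf hf₀ hΛ' htop' hα₁ hgap'
  refine ⟨-J, C, neg_pos.1 hJ, fun T hT W hW => ?_⟩
  obtain ⟨n, hn, hn', hC⟩ := hC T hT W hW
  refine ⟨n, ?_, ?_, hC⟩
  · rw [show -J - n = -(J + n) by ring]; linarith
  · rw [show -J - n - 1 = -(J + n + 1) by ring]; linarith

theorem exists_natCard_bounds (hf : Monotone f) (hf₀ : ∀ t, 0 ≤ f t) (hΛ : StrictMono Λ)
    (htop : Tendsto Λ atTop atTop) (hbot : Tendsto Λ atBot atBot) (hα₁ : 0 < α₁)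
    (h₁ : α₁ < α) (h₂ : α < α₂)
    (hgtop : Tendsto (fun j => f |Λ j| * (Λ (j + 1) - Λ j)) atTop (𝓝 α))
    (hgbot : Tendsto (fun j => f |Λ j| * (Λ (j + 1) - Λ j)) atBot (𝓝 α)) :
    ∃ C, ∀ T ≥ C, ∀ W ≥ 0,
      2 * (∫ t in (0 : ℝ)..T, min (f t) W) ≤ α₂ * Nat.card {j | Λ j ∈ Icc (-T) T} + C * W ∧
      (f T ≤ W → α₁ * Nat.card {j | Λ j ∈ Icc (-T) T} ≤
        2 * (∫ t in (0 : ℝ)..T, min (f t) W) + C * (W + 1)) := by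
  obtain ⟨J₁, C₁, hJ₁, hC₁⟩ := exists_upper_tail_bounds hf hf₀ hΛ.monotone htop hα₁ h₁ h₂ hgtop
  obtain ⟨J₀, C₀, hJ₀, hC₀⟩ := exists_lower_tail_bounds hf hf₀ hΛ.monotone hbot hα₁ h₁ h₂ hgbot
  have hJ : J₀ < J₁ := hΛ.lt_iff_lt.1 (hJ₀.trans hJ₁)
  have hJ' : (1 : ℝ) ≤ J₁ - J₀ := by norm_cast; omega
  set C := max (max (Λ J₁) (-Λ J₀)) (max (C₁ + C₀) (α₁ * (J₁ - J₀ + 1)))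
  refine ⟨C, fun T hT W hW => ?_⟩
  have hCΛ₁ : Λ J₁ ≤ C := (le_max_left _ _).trans (le_max_left _ _)
  have hCΛ₀ : -Λ J₀ ≤ C := (le_max_right _ _).trans (le_max_left _ _)
  have hCC : C₁ + C₀ ≤ C := (le_max_left _ _).trans (le_max_right _ _)
  have hCJ : α₁ * (J₁ - J₀ + 1) ≤ C := (le_max_right _ _).trans (le_max_right _ _)
  obtain ⟨n, hn, hn', hup₁, hlow₁⟩ := hC₁ T (hCΛ₁.trans hT) W hW
  obtain ⟨m, hm, hm', hup₀, hlow₀⟩ := hC₀ T (hCΛ₀.trans hT) W hW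
  rw [hΛ.natCard_setOf_mem_Icc (by omega) hm hm' hn hn']
  push_cast
  have hCW := mul_le_mul_of_nonneg_right hCC hW
  refine ⟨by nlinarith, fun hfT => ?_⟩
  nlinarith [hlow₁ hfT, hlow₀ hfT]

end TwoSided

def aboveGraph (f : ℝ → ℝ) (T W : ℝ) : Set (ℝ × ℝ) :=
  {p | p.1 ∈ Ioc 0 T ∧ p.2 ∈ Icc 0 W ∧ f p.1 ≤ p.2}

theorem measurableSet_aboveGraph {f : ℝ → ℝ} (hf : Measurable f) (T W : ℝ) :
    MeasurableSet (aboveGraph f T W) :=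
  (measurableSet_Ioc.preimage measurable_fst).inter
    ((measurableSet_Icc.preimage measurable_snd).inter
      (measurableSet_le (hf.comp measurable_fst) measurable_snd))

theorem volume_aboveGraph_eq_integral_sub_min {f : ℝ → ℝ} (hf : Monotone f)
    (hf₀ : ∀ t, 0 ≤ f t) (T W : ℝ) :
    volume (aboveGraph f T W) = ENNReal.ofReal (∫ x in Ioc 0 T, (W - min (f x) W)) := by
  rw [Measure.volume_eq_prod, Measure.prod_apply (measurableSet_aboveGraph hf.measurable T W),
    ofReal_integral_eq_lintegral_ofReal (f := fun x => W - min (f x) W)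
      ((integrableOn_const (by simp)).sub (hf.min monotone_const).intervalIntegrable.1)
      (.of_forall fun x => sub_nonneg.2 (min_le_right _ _)),
    ← lintegral_indicator measurableSet_Ioc]
  refine lintegral_congr fun x => ?_
  by_cases hx : x ∈ Ioc 0 T
  · have : Prod.mk x ⁻¹' aboveGraph f T W = Icc (f x) W := by
      ext y
      simp only [aboveGraph, mem_preimage, mem_ofPred_eq, mem_Icc, hx, true_and]
      exact ⟨fun h => ⟨h.2, h.1.2⟩, fun h => ⟨⟨(hf₀ x).trans h.1, h.2⟩, h.1⟩⟩
    rw [this, Real.volume_Icc, indicator_of_mem hx]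
    rcases le_total (f x) W with h | h
    · rw [min_eq_left h]
    · rw [min_eq_right h, sub_self, ENNReal.ofReal_zero, ENNReal.ofReal_of_nonpos (by linarith)]
  · have : Prod.mk x ⁻¹' aboveGraph f T W = ∅ := by
      ext y
      simp only [aboveGraph, mem_preimage, mem_ofPred_eq, mem_empty_iff_false, iff_false]
      exact fun h => hx h.1
    rw [this, indicator_of_notMem hx, measure_empty]

theorem volume_aboveGraph_eq_integral_min {f g : ℝ → ℝ} (hf : Monotone f) (hg : Monotone g)
    (hg₀ : ∀ t, 0 ≤ g t) (hfg : ∀ x y, 0 ≤ x → 0 ≤ y → (f x ≤ y ↔ x ≤ g y)) {T : ℝ}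
    (hT : 0 ≤ T) (W : ℝ) :
    volume (aboveGraph f T W) = ENNReal.ofReal (∫ y in Icc 0 W, min (g y) T) := by
  rw [Measure.volume_eq_prod,
    Measure.prod_apply_symm (measurableSet_aboveGraph hf.measurable T W),
    ofReal_integral_eq_lintegral_ofReal
      (((hg.min monotone_const).monotoneOn _).integrableOn_isCompact isCompact_Icc)
      (.of_forall fun y => le_min (hg₀ y) hT), ← lintegral_indicator measurableSet_Icc]
  refine lintegral_congr fun y => ?_
  by_cases hy : y ∈ Icc 0 W
  · have : (fun x => (x, y)) ⁻¹' aboveGraph f T W = Ioc 0 (min (g y) T) := by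
      ext x
      simp only [aboveGraph, mem_preimage, mem_ofPred_eq, mem_Ioc, le_min_iff, hy, true_and]
      exact ⟨fun h => ⟨h.1.1, (hfg x y h.1.1.le hy.1).1 h.2, h.1.2⟩,
        fun h => ⟨⟨h.1, h.2.2⟩, (hfg x y h.1.le hy.1).2 h.2.1⟩⟩
    rw [this, Real.volume_Ioc, indicator_of_mem hy, sub_zero]
  · have : (fun x => (x, y)) ⁻¹' aboveGraph f T W = ∅ := by
      ext x
      simp only [aboveGraph, mem_preimage, mem_ofPred_eq, mem_empty_iff_false, iff_false]
      exact fun h => hy h.2.1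
    rw [this, indicator_of_notMem hy, measure_empty]

theorem intervalIntegral_min_add_intervalIntegral_min {f g : ℝ → ℝ} (hf : Monotone f)
    (hg : Monotone g) (hf₀ : ∀ t, 0 ≤ f t) (hg₀ : ∀ t, 0 ≤ g t)
    (hfg : ∀ x y, 0 ≤ x → 0 ≤ y → (f x ≤ y ↔ x ≤ g y)) {T W : ℝ} (hT : 0 ≤ T) (hW : 0 ≤ W) :
    (∫ t in (0 : ℝ)..T, min (f t) W) + ∫ t in (0 : ℝ)..W, min (g t) T = W * T := by
  have h := (volume_aboveGraph_eq_integral_sub_min hf hf₀ T W).symm.trans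
    (volume_aboveGraph_eq_integral_min hf hg hg₀ hfg hT W)
  rw [ENNReal.ofReal_eq_ofReal_iff
      (setIntegral_nonneg measurableSet_Ioc fun x _ => sub_nonneg.2 (min_le_right _ _))
      (setIntegral_nonneg measurableSet_Icc fun y _ => le_min (hg₀ y) hT),
    integral_sub (integrableOn_const (s := Ioc (0 : ℝ) T) (C := W) (by simp))
      (hf.min monotone_const).intervalIntegrable.1,
    setIntegral_const, Real.volume_real_Ioc_of_le hT, smul_eq_mul,
    integral_Icc_eq_integral_Ioc] at h
  rw [intervalIntegral.integral_of_le hT, intervalIntegral.integral_of_le hW, ← h]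
  ring

theorem exists_sum_natCard_bounds {f g : ℝ → ℝ} (hf : Monotone f) (hg : Monotone g)
    (hf₀ : ∀ t, 0 ≤ f t) (hg₀ : ∀ t, 0 ≤ g t)
    (hfg : ∀ x y, 0 ≤ x → 0 ≤ y → (f x ≤ y ↔ x ≤ g y)) {Λ M : ℤ → ℝ} (hΛ : StrictMono Λ)
    (hM : StrictMono M) (hΛtop : Tendsto Λ atTop atTop) (hΛbot : Tendsto Λ atBot atBot)
    (hMtop : Tendsto M atTop atTop) (hMbot : Tendsto M atBot atBot) {α α₁ α₂ : ℝ}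
    (hα₁ : 0 < α₁) (h₁ : α₁ < α) (h₂ : α < α₂)
    (hgΛtop : Tendsto (fun j => f |Λ j| * (Λ (j + 1) - Λ j)) atTop (𝓝 α))
    (hgΛbot : Tendsto (fun j => f |Λ j| * (Λ (j + 1) - Λ j)) atBot (𝓝 α))
    (hgMtop : Tendsto (fun j => g |M j| * (M (j + 1) - M j)) atTop (𝓝 α))
    (hgMbot : Tendsto (fun j => g |M j| * (M (j + 1) - M j)) atBot (𝓝 α)) :
    ∃ C ≥ 0, ∀ W ≥ C, ∀ T ≥ C,
      2 * W * T ≤ α₂ * ((Nat.card {j | Λ j ∈ Icc (-T) T} : ℝ) +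
        Nat.card {j | M j ∈ Icc (-W) W}) + C * (W + T) ∧
      (f T ≤ W → g W ≤ T → α₁ * ((Nat.card {j | Λ j ∈ Icc (-T) T} : ℝ) +
        Nat.card {j | M j ∈ Icc (-W) W}) ≤ 2 * W * T + C * (W + T)) := by
  obtain ⟨C₁, hC₁⟩ := exists_natCard_bounds hf hf₀ hΛ hΛtop hΛbot hα₁ h₁ h₂ hgΛtop hgΛbot
  obtain ⟨C₂, hC₂⟩ := exists_natCard_bounds hg hg₀ hM hMtop hMbot hα₁ h₁ h₂ hgMtop hgMbot
  set D := max (max C₁ C₂) 1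
  have hD₁ : C₁ ≤ D := (le_max_left _ _).trans (le_max_left _ _)
  have hD₂ : C₂ ≤ D := (le_max_right _ _).trans (le_max_left _ _)
  have hD : 1 ≤ D := le_max_right _ _
  refine ⟨2 * D, by positivity, fun W hW T hT => ?_⟩
  have hW₀ : 0 ≤ W := by linarith
  have hT₀ : 0 ≤ T := by linarith
  obtain ⟨hΛlow, hΛup⟩ := hC₁ T (by linarith) W hW₀
  obtain ⟨hMlow, hMup⟩ := hC₂ W (by linarith) T hT₀
  have harea := intervalIntegral_min_add_intervalIntegral_min hf hg hf₀ hg₀ hfg hT₀ hW₀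
  have h₁W := mul_le_mul_of_nonneg_right hD₁ hW₀
  have h₂T := mul_le_mul_of_nonneg_right hD₂ hT₀
  refine ⟨by nlinarith, fun hfT hgW => ?_⟩
  nlinarith [hΛup hfT, hMup hgW]

theorem mul_add_le_div_mul {C K W T : ℝ} (hC : 0 ≤ C) (hK : 0 < K) (hW : K ≤ W) (hT : K ≤ T) :
    C * (W + T) ≤ C / K * (2 * W * T) := by
  rw [div_mul_eq_mul_div, le_div_iff₀ hK]
  nlinarith [mul_nonneg (mul_nonneg hC (sub_nonneg.2 hW)) (hK.le.trans hT),
    mul_nonneg (mul_nonneg hC (sub_nonneg.2 hT)) (hK.le.trans hW)]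

theorem density_ge_of_two_mul_le {N C K W T a : ℝ} (hC : 0 ≤ C) (hK : 0 < K) (hW : K ≤ W)
    (hT : K ≤ T) (ha : 0 < a) (h : 2 * W * T ≤ a * N + C * (W + T)) :
    (1 - C / K) / (2 * a) ≤ N / (4 * W * T) := by
  have := mul_add_le_div_mul hC hK hW hT
  have hWT : 0 < W * T := mul_pos (hK.trans_le hW) (hK.trans_le hT)
  rw [div_le_div_iff₀ (by positivity) (by nlinarith)]
  nlinarith

theorem density_le_of_le_two_mul {N C K W T a : ℝ} (hC : 0 ≤ C) (hK : 0 < K) (hW : K ≤ W)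
    (hT : K ≤ T) (ha : 0 < a) (h : a * N ≤ 2 * W * T + C * (W + T)) :
    N / (4 * W * T) ≤ (1 + C / K) / (2 * a) := by
  have := mul_add_le_div_mul hC hK hW hT
  have hWT : 0 < W * T := mul_pos (hK.trans_le hW) (hK.trans_le hT)
  rw [div_le_div_iff₀ (by nlinarith) (by positivity)]
  nlinarith

theorem tendsto_sInf_density (N : ℝ → ℝ → ℝ) {α : ℝ} (hα : 0 < α)
    (hlow : ∀ α₂ > α, ∃ C ≥ 0, ∀ W ≥ C, ∀ T ≥ C, 2 * W * T ≤ α₂ * N W T + C * (W + T))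
    (hupp : ∀ α₁ ∈ Ioo 0 α, ∃ C ≥ 0, ∀ K,
      ∃ W ≥ K, ∃ T ≥ K, α₁ * N W T ≤ 2 * W * T + C * (W + T)) :
    Tendsto (fun K => sInf {r | ∃ W ≥ K, ∃ T ≥ K, r = N W T / (4 * W * T)}) atTop
      (𝓝 (1 / (2 * α))) := by
  have hcont : ContinuousAt (fun a : ℝ => 1 / (2 * a)) α :=
    continuousAt_const.div (by fun_prop) (by positivity)
  have hlim : ∀ a C : ℝ, Tendsto (fun K => (1 + C / K) / (2 * a)) atTop (𝓝 (1 / (2 * a))) :=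
    fun a C => by
      simpa using ((tendsto_const_nhds (x := (1 : ℝ))).add
        ((tendsto_const_nhds (x := C)).div_atTop tendsto_id)).div_const (2 * a)
  have hbound : ∀ α₂ > α, ∃ C, ∀ᶠ K in atTop, ∀ r ∈ {r | ∃ W ≥ K, ∃ T ≥ K, r = N W T / (4 * W * T)},
      (1 + -C / K) / (2 * α₂) ≤ r := fun α₂ hα₂ => by
    obtain ⟨C, hC, hCb⟩ := hlow α₂ hα₂
    refine ⟨C, ?_⟩
    filter_upwards [eventually_ge_atTop (max C 1)] with K hK
    rintro _ ⟨W, hW, T, hT, rfl⟩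
    have hK₀ : 0 < K := one_pos.trans_le ((le_max_right _ _).trans hK)
    rw [neg_div, ← sub_eq_add_neg]
    exact density_ge_of_two_mul_le hC hK₀ hW hT (hα.trans hα₂)
      (hCb W ((le_max_left _ _).trans (hK.trans hW)) T ((le_max_left _ _).trans (hK.trans hT)))
  refine tendsto_order.2 ⟨fun a ha => ?_, fun b hb => ?_⟩
  · obtain ⟨α₂, hα₂, ha₂⟩ := (hcont.eventually (lt_mem_nhds ha)).exists_gt
    obtain ⟨C, hC⟩ := hbound α₂ hα₂
    filter_upwards [(hlim α₂ (-C)).eventually (lt_mem_nhds ha₂), hC] with K hK hCK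
    exact hK.trans_le (le_csInf ⟨_, K, le_rfl, K, le_rfl, rfl⟩ hCK)
  · obtain ⟨α₁, hα₁, hb₁, hα₁₀⟩ :=
      ((hcont.eventually (gt_mem_nhds hb)).and (lt_mem_nhds hα)).exists_lt
    obtain ⟨C, hC, hCb⟩ := hupp α₁ ⟨hα₁₀, hα₁⟩
    obtain ⟨C', hC'⟩ := hbound (α + 1) (by linarith)
    filter_upwards [(hlim α₁ C).eventually (gt_mem_nhds hb₁), hC', eventually_gt_atTop 0]
      with K hK hC'K hK₀
    obtain ⟨W, hW, T, hT, h⟩ := hCb K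
    exact (csInf_le ⟨_, hC'K⟩ ⟨W, hW, T, hT, rfl⟩).trans_lt
      ((density_le_of_le_two_mul hC hK₀ hW hT hα₁₀ h).trans_lt hK)

theorem MonotoneOn.le_iff_le_of_inverse {S Sinv : ℝ → ℝ} (hS : MonotoneOn S (Ici 0))
    (hinv_left : ∀ t ≥ (0 : ℝ), Sinv (S t) = t)
    (hinv_right : ∀ y ≥ (0 : ℝ), 0 ≤ Sinv y ∧ S (Sinv y) = y) {x y : ℝ} (hx : 0 ≤ x)
    (hy : 0 ≤ y) : S x ≤ y ↔ x ≤ Sinv y := by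
  obtain ⟨hSinv₀, hSSinv⟩ := hinv_right y hy
  refine ⟨fun h => ?_, fun h => hSSinv ▸ hS hx hSinv₀ h⟩
  by_contra! hlt
  have : S x = y := le_antisymm h (hSSinv ▸ hS hSinv₀ hx hlt.le)
  exact hlt.ne (by rw [← this, hinv_left x hx])

theorem exists_monotone_extensions {S Sinv : ℝ → ℝ} (hnn : ∀ t ≥ (0 : ℝ), 0 ≤ S t)
    (hS : MonotoneOn S (Ici 0)) (hinv_left : ∀ t ≥ (0 : ℝ), Sinv (S t) = t)
    (hinv_right : ∀ y ≥ (0 : ℝ), 0 ≤ Sinv y ∧ S (Sinv y) = y) :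
    ∃ f g : ℝ → ℝ, Monotone f ∧ Monotone g ∧ (∀ t, 0 ≤ f t) ∧ (∀ t, 0 ≤ g t) ∧
      (∀ x y, 0 ≤ x → 0 ≤ y → (f x ≤ y ↔ x ≤ g y)) ∧ EqOn f S (Ici 0) ∧
      EqOn g Sinv (Ici 0) := by
  have hgal {x y : ℝ} (hx : 0 ≤ x) (hy : 0 ≤ y) :=
    hS.le_iff_le_of_inverse hinv_left hinv_right hx hy
  refine ⟨fun t => S (max t 0), fun t => Sinv (max t 0),
    fun a b h => hS (le_max_right a 0) (le_max_right b 0) (max_le_max h le_rfl),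
    fun a b h => ?_, fun t => hnn _ (le_max_right t 0),
    fun t => (hinv_right _ (le_max_right t 0)).1,
    fun x y hx hy => ?_, fun t ht => by simp [max_eq_left (mem_Ici.1 ht)],
    fun t ht => by simp [max_eq_left (mem_Ici.1 ht)]⟩
  · refine (hgal (hinv_right _ (le_max_right a 0)).1 (le_max_right b 0)).1 ?_
    rw [(hinv_right _ (le_max_right a 0)).2]
    exact max_le_max h le_rfl
  · simpa only [max_eq_left hx, max_eq_left hy] using hgal hx hy

theorem critical_density_of_gap_limits_general
    (S Sinv : ℝ → ℝ) (Λ M : ℤ → ℝ) (α : ℝ) (hα : 0 < α)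
    (hnn : ∀ t ≥ (0:ℝ), 0 ≤ S t)
    (hmono : StrictMonoOn S (Ici 0))
    (hunbdd : ∀ m : ℝ, ∃ t ≥ (0:ℝ), m < S t)
    (hinv_left : ∀ t ≥ (0:ℝ), Sinv (S t) = t)
    (hinv_right : ∀ y ≥ (0:ℝ), 0 ≤ Sinv y ∧ S (Sinv y) = y)
    (hΛmono : StrictMono Λ) (hMmono : StrictMono M)
    (hΛtop : Tendsto Λ atTop atTop) (hΛbot : Tendsto Λ atBot atBot)
    (hMtop : Tendsto M atTop atTop) (hMbot : Tendsto M atBot atBot)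
    (hgapΛtop : Tendsto (fun j : ℤ => S |Λ j| * (Λ (j + 1) - Λ j)) atTop (nhds α))
    (hgapΛbot : Tendsto (fun j : ℤ => S |Λ j| * (Λ (j + 1) - Λ j)) atBot (nhds α))
    (hgapMtop : Tendsto (fun j : ℤ => Sinv |M j| * (M (j + 1) - M j)) atTop (nhds α))
    (hgapMbot : Tendsto (fun j : ℤ => Sinv |M j| * (M (j + 1) - M j)) atBot (nhds α)) :
    Tendsto (fun K : ℝ =>
        sInf {r : ℝ | ∃ W ≥ K, ∃ T ≥ K,
          r = ((Nat.card {j : ℤ | Λ j ∈ Icc (-T) T} : ℝ) +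
               (Nat.card {j : ℤ | M j ∈ Icc (-W) W} : ℝ)) / (4 * W * T)})
      atTop (nhds (1 / (2 * α))) := by
  obtain ⟨f, g, hf, hg, hf₀, hg₀, hfg, hfS, hgS⟩ :=
    exists_monotone_extensions hnn hmono.monotoneOn hinv_left hinv_right
  have hf_abs : ∀ x : ℝ, f |x| = S |x| := fun x => hfS (abs_nonneg x)
  have hg_abs : ∀ x : ℝ, g |x| = Sinv |x| := fun x => hgS (abs_nonneg x)
  simp_rw [← hf_abs] at hgapΛtop hgapΛbot
  simp_rw [← hg_abs] at hgapMtop hgapMbot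
  have hbounds {α₁ α₂ : ℝ} (hα₁ : 0 < α₁) (h₁ : α₁ < α) (h₂ : α < α₂) :=
    exists_sum_natCard_bounds hf hg hf₀ hg₀ hfg hΛmono hMmono hΛtop hΛbot hMtop hMbot hα₁ h₁ h₂
      hgapΛtop hgapΛbot hgapMtop hgapMbot
  refine tendsto_sInf_density _ hα (fun α₂ hα₂ => ?_) (fun α₁ ⟨hα₁, h₁⟩ => ?_)
  · obtain ⟨C, hC, h⟩ := hbounds (half_pos hα) (half_lt_self hα) hα₂
    exact ⟨C, hC, fun W hW T hT => (h W hW T hT).1⟩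
  · obtain ⟨C, hC, h⟩ := hbounds hα₁ h₁ (lt_add_one α)
    refine ⟨C, hC, fun K => ?_⟩
    obtain ⟨t, ht, hSt⟩ := hunbdd (max K C)
    set T := max (max K C) t
    have hT : max K C ≤ T := le_max_left _ _
    have hT₀ : 0 ≤ T := ht.trans (le_max_right _ _)
    have hST : max K C ≤ S T := hSt.le.trans (hmono.monotoneOn ht hT₀ (le_max_right _ _))
    have hfT : f T = S T := hfS hT₀
    have hgST : g (S T) = T := (hgS (hnn T hT₀)).trans (hinv_left T hT₀)
    refine ⟨S T, (le_max_left _ _).trans hST, T, (le_max_left _ _).trans hT, ?_⟩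
    exact (h _ ((le_max_right _ _).trans hST) T ((le_max_right _ _).trans hT)).2 hfT.le hgST.le

theorem critical_density_of_gap_limits
    (S Sinv : ℝ → ℝ) (Λ M : ℤ → ℝ) (α : ℝ) (hα : 0 < α)
    (hnn : ∀ t ≥ (0:ℝ), 0 ≤ S t) (hS0 : S 0 = 0)
    (hmono : StrictMonoOn S (Ici 0))
    (hC1 : ContDiffOn ℝ 1 S (Ici 0))
    (hunbdd : ∀ m : ℝ, ∃ t ≥ (0:ℝ), m < S t)
    (hinv_left : ∀ t ≥ (0:ℝ), Sinv (S t) = t)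
    (hinv_right : ∀ y ≥ (0:ℝ), 0 ≤ Sinv y ∧ S (Sinv y) = y)
    (hΛmono : StrictMono Λ) (hMmono : StrictMono M)
    (hΛtop : Tendsto Λ atTop atTop) (hΛbot : Tendsto Λ atBot atBot)
    (hMtop : Tendsto M atTop atTop) (hMbot : Tendsto M atBot atBot)
    (hgapΛtop : Tendsto (fun j : ℤ => S |Λ j| * (Λ (j + 1) - Λ j)) atTop (nhds α))
    (hgapΛbot : Tendsto (fun j : ℤ => S |Λ j| * (Λ (j + 1) - Λ j)) atBot (nhds α))
    (hgapMtop : Tendsto (fun j : ℤ => Sinv |M j| * (M (j + 1) - M j)) atTop (nhds α))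
    (hgapMbot : Tendsto (fun j : ℤ => Sinv |M j| * (M (j + 1) - M j)) atBot (nhds α)) :
    Tendsto (fun K : ℝ =>
        sInf {r : ℝ | ∃ W ≥ K, ∃ T ≥ K,
          r = ((Nat.card {j : ℤ | Λ j ∈ Icc (-T) T} : ℝ) +
               (Nat.card {j : ℤ | M j ∈ Icc (-W) W} : ℝ)) / (4 * W * T)})
      atTop (nhds (1 / (2 * α))) :=
  critical_density_of_gap_limits_general S Sinv Λ M α hα hnn hmono hunbdd hinv_left hinv_right
    hΛmono hMmono hΛtop hΛbot hMtop hMbot hgapΛtop hgapΛbot hgapMtop hgapMbot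
end

section
/- Let M = (μ_j)_{j∈ℤ} be a strictly increasing sequence with μ_j → ±∞ as j → ±∞, let W : ℝ → [0,∞) be measurable, and let ĝ be a C¹ function in L²(ℝ) vanishing at every μ_j. If W(ξ) ≤ w_j on [μ_j, μ_{j+1}] and √(w_j)·(μ_{j+1}−μ_j) ≤ 1/2 for all j, then ∫_ℝ W(ξ)|ĝ(ξ)|² dξ ≤ (1/(2π))² ∫_ℝ |ĝ'(ξ)|² dξ. -/
open MeasureTheory Set Filter

section WirtingerAux

open Complex intervalIntegral AddCircle
open scoped ENNReal

lemma parseval_cont {T : ℝ} [hT : Fact (0 < T)] (F : C(AddCircle T, ℂ)) :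
    ∑' n : ℤ, ‖fourierCoeff (F : AddCircle T → ℂ) n‖ ^ 2
      = ∫ t : AddCircle T, ‖F t‖ ^ 2 ∂haarAddCircle := by
  have h := tsum_sq_fourierCoeff (ContinuousMap.toLp (E := ℂ) 2 haarAddCircle ℂ F)
  simp_rw [fourierCoeff_toLp] at h
  rw [h]
  refine integral_congr_ae ?_
  filter_upwards [ContinuousMap.coeFn_toLp (p := 2) haarAddCircle (𝕜 := ℂ) F] with t ht
  rw [ht]

lemma parseval_summable {T : ℝ} [hT : Fact (0 < T)] (F : C(AddCircle T, ℂ)) :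
    Summable (fun n : ℤ => ‖fourierCoeff (F : AddCircle T → ℂ) n‖ ^ 2) := by
  have hm := lp.memℓp (fourierBasis.repr (ContinuousMap.toLp (E := ℂ) 2 haarAddCircle ℂ F))
  have hs := hm.summable (by norm_num)
  have : ∀ n : ℤ, ‖fourierCoeff (F : AddCircle T → ℂ) n‖ ^ 2
      = ‖fourierBasis.repr (ContinuousMap.toLp (E := ℂ) 2 haarAddCircle ℂ F) n‖ ^ (ENNReal.toReal 2) := by
    intro n
    rw [fourierBasis_repr, fourierCoeff_toLp]
    norm_num [Real.rpow_natCast]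
  rw [funext this]
  exact hs

lemma liftIco_eq_on {T : ℝ} [hT : Fact (0 < T)] {a : ℝ} {G : ℝ → ℂ}
    (hper : G a = G (a + T)) :
    ∀ x ∈ Icc a (a + T), liftIco T a G ↑x = G x := by
  intro x hx
  rcases eq_or_lt_of_le hx.2 with h | h
  · have hco : ((a + T : ℝ) : AddCircle T) = (a : AddCircle T) := by
      simpa [add_comm] using AddCircle.coe_add_period T a
    have hmem : a ∈ Ico a (a + T) := ⟨le_rfl, by linarith [hT.out]⟩
    subst h
    rw [hco, liftIco_coe_apply hmem, hper]
  · exact liftIco_coe_apply ⟨hx.1, h⟩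

lemma tsum_sq_fourierCoeffOn' {T : ℝ} [hT : Fact (0 < T)] {a : ℝ} {G : ℝ → ℂ}
    (hG : Continuous G) (hper : G a = G (a + T)) :
    (∑' n : ℤ, ‖fourierCoeffOn (lt_add_of_pos_right a hT.out) G n‖ ^ 2)
      = (1 / T) * ∫ x in a..(a + T), ‖G x‖ ^ 2 := by
  set F : C(AddCircle T, ℂ) := ⟨liftIco T a G, AddCircle.liftIco_continuous hper hG.continuousOn⟩
  have h1 : ∀ n : ℤ, fourierCoeffOn (lt_add_of_pos_right a hT.out) G n
      = fourierCoeff (F : AddCircle T → ℂ) n := by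
    intro n
    exact (fourierCoeff_liftIco_eq G n).symm
  simp_rw [h1]
  rw [parseval_cont F]
  have h2 : ∫ t : AddCircle T, ‖F t‖ ^ 2
      = T * ∫ t : AddCircle T, ‖F t‖ ^ 2 ∂haarAddCircle := by
    rw [volume_eq_smul_haarAddCircle, MeasureTheory.integral_smul_measure,
      ENNReal.toReal_ofReal hT.out.le, smul_eq_mul]
  have h3 : ∫ x in a..(a + T), ‖G x‖ ^ 2 = ∫ t : AddCircle T, ‖F t‖ ^ 2 := by
    rw [← AddCircle.intervalIntegral_preimage T a]
    refine intervalIntegral.integral_congr fun x hx => ?_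
    rw [uIcc_of_le (by linarith [hT.out])] at hx
    rw [show (F : AddCircle T → ℂ) ↑x = G x from liftIco_eq_on hper x hx]
  rw [h3, h2]
  have hX : ∀ X : ℝ, X = 1 / T * (T * X) := fun X => by
    field_simp
    rw [mul_div_assoc, div_self hT.out.ne', mul_one]
  exact hX _

lemma summable_sq_fourierCoeffOn {T : ℝ} [hT : Fact (0 < T)] {a : ℝ} {G : ℝ → ℂ}
    (hG : Continuous G) (hper : G a = G (a + T)) :
    Summable (fun n : ℤ => ‖fourierCoeffOn (lt_add_of_pos_right a hT.out) G n‖ ^ 2) := by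
  set F : C(AddCircle T, ℂ) := ⟨liftIco T a G, AddCircle.liftIco_continuous hper hG.continuousOn⟩
  have h1 : ∀ n : ℤ, fourierCoeffOn (lt_add_of_pos_right a hT.out) G n
      = fourierCoeff (F : AddCircle T → ℂ) n := fun n => (fourierCoeff_liftIco_eq G n).symm
  simp_rw [h1]
  exact parseval_summable F

lemma wirtinger_interval {a b : ℝ} (hab : a < b) {g : ℝ → ℝ} (hg : ContDiff ℝ 1 g)
    (ha : g a = 0) (hb : g b = 0) :
    ∫ x in a..b, g x ^ 2 ≤ ((b - a) / Real.pi) ^ 2 * ∫ x in a..b, deriv g x ^ 2 := by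
  classical
  have hgc : Continuous g := hg.continuous
  have hg'c : Continuous (deriv g) := hg.continuous_deriv le_rfl
  have hgd : ∀ x, HasDerivAt g (deriv g x) x := fun x =>
    (hg.differentiable one_ne_zero x).hasDerivAt
  set T : ℝ := 2 * (b - a) with hTdef
  haveI hT : Fact (0 < T) := ⟨by simp only [hTdef]; linarith⟩
  have hac : a < a + T := lt_add_of_pos_right a hT.out
  have haT : a + T = 2 * b - a := by simp only [hTdef]; ring
  set G : ℝ → ℂ := fun x => if x ≤ b then (g x : ℂ) else -(g (2 * b - x) : ℂ) with hGdef
  set G' : ℝ → ℂ := fun x => if x ≤ b then ((deriv g x : ℝ) : ℂ) else ((deriv g (2 * b - x) : ℝ) : ℂ)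
    with hG'def
  -- continuity
  have hGc : Continuous G := by
    refine Continuous.if_le (Complex.continuous_ofReal.comp hgc)
      ((Complex.continuous_ofReal.comp (hgc.comp (continuous_const.sub continuous_id))).neg)
      continuous_id continuous_const fun x hx => ?_
    subst hx
    simp [show 2 * x - x = x by ring, hb]
  have hG'c : Continuous G' := by
    refine Continuous.if_le (Complex.continuous_ofReal.comp hg'c)
      (Complex.continuous_ofReal.comp (hg'c.comp (continuous_const.sub continuous_id)))
      continuous_id continuous_const fun x hx => ?_
    subst hx
    simp [show 2 * x - x = x by ring]
  -- values at special points
  have hGa : G a = 0 := by simp [hGdef, hab.le, ha]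
  have hGb : G b = 0 := by simp [hGdef, hb]
  have hGaT : G (a + T) = 0 := by
    rw [hGdef]
    simp only [haT]
    rw [if_neg (by linarith), show 2 * b - (2 * b - a) = a by ring, ha]
    simp
  have hG'per : G' a = G' (a + T) := by
    rw [hG'def]
    simp only [haT]
    rw [if_pos hab.le, if_neg (by linarith), show 2 * b - (2 * b - a) = a by ring]
  have hGper : G a = G (a + T) := by rw [hGa, hGaT]
  -- derivative of the reflected piece
  have hd2 : ∀ x : ℝ, HasDerivAt (fun y : ℝ => -(g (2 * b - y) : ℂ))
      ((deriv g (2 * b - x) : ℝ) : ℂ) x := by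
    intro x
    have h1 : HasDerivAt (fun y : ℝ => 2 * b - y) (-1 : ℝ) x := by
      simpa using (hasDerivAt_id x).const_sub (2 * b)
    have h2 : HasDerivAt (fun y : ℝ => g (2 * b - y)) (deriv g (2 * b - x) * (-1)) x :=
      (hgd (2 * b - x)).comp x h1
    have h3 := h2.ofReal_comp.neg
    exact h3.congr_deriv (by push_cast; ring)
  -- one-sided derivatives for the Fourier coefficient formula
  have hGG' : ∀ x ∈ Ioo (min a (a + T)) (max a (a + T)),
      HasDerivWithinAt G (G' x) (Ioi x) x := by
    rw [min_eq_left hac.le, max_eq_right hac.le]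
    intro x hx
    rcases lt_trichotomy x b with hxb | hxb | hxb
    · have hev : G =ᶠ[nhdsWithin x (Ioi x)] (fun y : ℝ => (g y : ℂ)) := by
        filter_upwards [mem_nhdsWithin_of_mem_nhds (Iio_mem_nhds hxb)] with y hy
        rw [hGdef]; simp only [if_pos (mem_Iio.mp hy).le]
      have := ((hgd x).ofReal_comp).hasDerivWithinAt (s := Ioi x)
      refine (this.congr_of_eventuallyEq hev ?_).congr_deriv ?_
      · rw [hGdef]; simp only [if_pos hxb.le]
      · rw [hG'def]; simp only [if_pos hxb.le]
    · subst hxb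
      have := (hd2 x).hasDerivWithinAt (s := Ioi x)
      refine (this.congr ?_ ?_).congr_deriv ?_
      · intro y hy
        rw [hGdef]; simp only [if_neg (not_le.mpr (mem_Ioi.mp hy))]
      · rw [hGdef]
        simp only [if_pos le_rfl]
        rw [show 2 * x - x = x by ring, hb]
        simp
      · rw [hG'def]
        simp only [if_pos le_rfl]
        rw [show 2 * x - x = x by ring]
    · have hev : G =ᶠ[nhdsWithin x (Ioi x)] (fun y : ℝ => -(g (2 * b - y) : ℂ)) := by
        filter_upwards [mem_nhdsWithin_of_mem_nhds (Ioi_mem_nhds hxb)] with y hy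
        rw [hGdef]; simp only [if_neg (not_le.mpr (mem_Ioi.mp hy))]
      have := (hd2 x).hasDerivWithinAt (s := Ioi x)
      refine (this.congr_of_eventuallyEq hev ?_).congr_deriv ?_
      · rw [hGdef]; simp only [if_neg (not_le.mpr hxb)]
      · rw [hG'def]; simp only [if_neg (not_le.mpr hxb)]
  -- Fourier coefficients of G in terms of those of G'
  have hcoeff : ∀ n : ℤ, n ≠ 0 → fourierCoeffOn hac G n
      = 1 / (-2 * Real.pi * I * n) * (-(T : ℂ) * fourierCoeffOn hac G' n) := by
    intro n hn
    have := fourierCoeffOn_of_hasDeriv_right hac hn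
      (hGc.continuousOn) hGG' (hG'c.intervalIntegrable a (a + T))
    rw [this, hGaT, hGa]
    push_cast [hTdef]
    ring
  -- zeroth coefficient vanishes
  have hiGab : IntervalIntegrable G volume a b := hGc.intervalIntegrable a b
  have hiGbc : IntervalIntegrable G volume b (a + T) := hGc.intervalIntegrable _ _
  have hint1 : ∫ x in a..b, G x = ∫ x in a..b, (g x : ℂ) := by
    refine intervalIntegral.integral_congr fun x hx => ?_
    rw [uIcc_of_le hab.le] at hx
    rw [hGdef]; simp only [if_pos hx.2]
  have hint2 : ∫ x in b..(a + T), G x = - ∫ x in a..b, (g x : ℂ) := by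
    have e1 : ∫ x in b..(a + T), G x = ∫ x in b..(a + T), -(g (2 * b - x) : ℂ) := by
      refine intervalIntegral.integral_congr fun x hx => ?_
      rw [uIcc_of_le (by linarith : b ≤ a + T)] at hx
      rcases eq_or_lt_of_le hx.1 with h | h
      · rw [hGdef]
        simp only [← h, if_pos le_rfl, show 2 * b - b = b by ring, hb]
        simp
      · rw [hGdef]; simp only [if_neg (not_le.mpr h)]
    rw [e1, intervalIntegral.integral_neg]
    congr 1
    have hcs := intervalIntegral.integral_comp_sub_left (a := b) (b := a + T)
      (fun y => (g y : ℂ)) (2 * b)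
    rw [hcs, show 2 * b - (a + T) = a by rw [haT]; ring, show 2 * b - b = b by ring]
  have hc0 : fourierCoeffOn hac G 0 = 0 := by
    rw [fourierCoeffOn_eq_integral]
    simp only [neg_zero, fourier_zero, one_smul]
    rw [← intervalIntegral.integral_add_adjacent_intervals hiGab hiGbc, hint1, hint2]
    simp
  -- norm estimate for nonzero coefficients
  have hnorm : ∀ n : ℤ, n ≠ 0 → ‖fourierCoeffOn hac G n‖
      ≤ (T / (2 * Real.pi)) * ‖fourierCoeffOn hac G' n‖ := by
    intro n hn
    rw [hcoeff n hn, norm_mul, norm_mul]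
    have h1 : ‖(1 : ℂ) / (-2 * (Real.pi : ℂ) * I * n)‖ = 1 / (2 * Real.pi * |(n : ℝ)|) := by
      rw [norm_div, norm_one, norm_mul, norm_mul, norm_mul]
      simp [Complex.norm_real, Complex.norm_I, abs_of_pos Real.pi_pos]
    have h2 : ‖(-(T : ℂ))‖ = T := by
      rw [norm_neg, Complex.norm_real]
      exact abs_of_pos hT.out
    rw [h1, h2]
    have hn1 : (1 : ℝ) ≤ |(n : ℝ)| := by
      rw [← Int.cast_abs]
      exact_mod_cast Int.one_le_abs hn
    have hpi : (0 : ℝ) < 2 * Real.pi := by positivity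
    have key : 1 / (2 * Real.pi * |(n : ℝ)|) ≤ 1 / (2 * Real.pi) := by
      apply one_div_le_one_div_of_le hpi
      nlinarith
    calc 1 / (2 * Real.pi * |(n : ℝ)|) * (T * ‖fourierCoeffOn hac G' n‖)
        ≤ 1 / (2 * Real.pi) * (T * ‖fourierCoeffOn hac G' n‖) := by
          refine mul_le_mul_of_nonneg_right key ?_
          exact mul_nonneg hT.out.le (norm_nonneg _)
      _ = T / (2 * Real.pi) * ‖fourierCoeffOn hac G' n‖ := by ring
  -- squared bound and Parseval
  have hS := summable_sq_fourierCoeffOn hGc hGper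
  have hS' := summable_sq_fourierCoeffOn hG'c hG'per
  have hbound : ∀ n : ℤ, ‖fourierCoeffOn hac G n‖ ^ 2
      ≤ (T / (2 * Real.pi)) ^ 2 * ‖fourierCoeffOn hac G' n‖ ^ 2 := by
    intro n
    by_cases hn : n = 0
    · subst hn
      rw [hc0]
      simpa using mul_nonneg (sq_nonneg (T / (2 * Real.pi)))
        (sq_nonneg ‖fourierCoeffOn hac G' 0‖)
    · calc ‖fourierCoeffOn hac G n‖ ^ 2
          ≤ (T / (2 * Real.pi) * ‖fourierCoeffOn hac G' n‖) ^ 2 :=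
            pow_le_pow_left₀ (norm_nonneg _) (hnorm n hn) 2
        _ = (T / (2 * Real.pi)) ^ 2 * ‖fourierCoeffOn hac G' n‖ ^ 2 := by ring
  have htsum := Summable.tsum_le_tsum hbound hS (hS'.mul_left ((T / (2 * Real.pi)) ^ 2))
  rw [tsum_mul_left, tsum_sq_fourierCoeffOn' hGc hGper,
    tsum_sq_fourierCoeffOn' hG'c hG'per] at htsum
  -- reflection identities for the squared-norm integrals
  have hrefl : ∀ u : ℝ → ℝ, Continuous u →
      (∫ x in b..(a + T), u (2 * b - x) ^ 2) = ∫ x in a..b, u x ^ 2 := by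
    intro u hu
    have hcs := intervalIntegral.integral_comp_sub_left (a := b) (b := a + T)
      (fun y => u y ^ 2) (2 * b)
    rw [hcs, show 2 * b - (a + T) = a by rw [haT]; ring, show 2 * b - b = b by ring]
  have hGsq : ∫ x in a..(a + T), ‖G x‖ ^ 2 = 2 * ∫ x in a..b, g x ^ 2 := by
    rw [← intervalIntegral.integral_add_adjacent_intervals
      ((by fun_prop : Continuous fun x => ‖G x‖ ^ 2).intervalIntegrable a b)
      ((by fun_prop : Continuous fun x => ‖G x‖ ^ 2).intervalIntegrable b (a + T))]
    have e1 : ∫ x in a..b, ‖G x‖ ^ 2 = ∫ x in a..b, g x ^ 2 := by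
      refine intervalIntegral.integral_congr fun x hx => ?_
      rw [uIcc_of_le hab.le] at hx
      rw [hGdef]
      simp only [if_pos hx.2, Complex.norm_real, Real.norm_eq_abs, _root_.sq_abs]
    have e2 : ∫ x in b..(a + T), ‖G x‖ ^ 2 = ∫ x in b..(a + T), g (2 * b - x) ^ 2 := by
      refine intervalIntegral.integral_congr fun x hx => ?_
      rw [uIcc_of_le (by linarith : b ≤ a + T)] at hx
      rcases eq_or_lt_of_le hx.1 with h | h
      · rw [hGdef]
        simp only [← h, if_pos le_rfl, show 2 * b - b = b by ring, hb]
        simp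
      · rw [hGdef]
        simp only [if_neg (not_le.mpr h), norm_neg, Complex.norm_real, Real.norm_eq_abs, _root_.sq_abs]
    rw [e1, e2, hrefl g hgc]
    ring
  have hG'sq : ∫ x in a..(a + T), ‖G' x‖ ^ 2 = 2 * ∫ x in a..b, deriv g x ^ 2 := by
    rw [← intervalIntegral.integral_add_adjacent_intervals
      ((by fun_prop : Continuous fun x => ‖G' x‖ ^ 2).intervalIntegrable a b)
      ((by fun_prop : Continuous fun x => ‖G' x‖ ^ 2).intervalIntegrable b (a + T))]
    have e1 : ∫ x in a..b, ‖G' x‖ ^ 2 = ∫ x in a..b, deriv g x ^ 2 := by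
      refine intervalIntegral.integral_congr fun x hx => ?_
      rw [uIcc_of_le hab.le] at hx
      rw [hG'def]
      simp only [if_pos hx.2, Complex.norm_real, Real.norm_eq_abs, _root_.sq_abs]
    have e2 : ∫ x in b..(a + T), ‖G' x‖ ^ 2 = ∫ x in b..(a + T), deriv g (2 * b - x) ^ 2 := by
      refine intervalIntegral.integral_congr fun x hx => ?_
      rw [uIcc_of_le (by linarith : b ≤ a + T)] at hx
      rcases eq_or_lt_of_le hx.1 with h | h
      · rw [hG'def]
        simp only [← h, if_pos le_rfl, show 2 * b - b = b by ring, Complex.norm_real,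
          Real.norm_eq_abs, _root_.sq_abs]
      · rw [hG'def]
        simp only [if_neg (not_le.mpr h), Complex.norm_real, Real.norm_eq_abs, _root_.sq_abs]
    rw [e1, e2, hrefl (deriv g) hg'c]
    ring
  rw [hGsq, hG'sq] at htsum
  -- conclude
  have hTpi : (T / (2 * Real.pi)) ^ 2 = ((b - a) / Real.pi) ^ 2 := by
    rw [hTdef]
    field_simp
  rw [hTpi] at htsum
  have hTne' : T ≠ 0 := hT.out.ne'
  have e3 := mul_le_mul_of_nonneg_left htsum hT.out.le
  have l1 : T * (1 / T * (2 * ∫ x in a..b, g x ^ 2)) = 2 * ∫ x in a..b, g x ^ 2 := by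
    field_simp
  have l2 : T * (((b - a) / Real.pi) ^ 2 * (1 / T * (2 * ∫ x in a..b, deriv g x ^ 2)))
      = ((b - a) / Real.pi) ^ 2 * (2 * ∫ x in a..b, deriv g x ^ 2) := by
    field_simp
  rw [l1, l2] at e3
  linarith


end WirtingerAux

theorem summed_poincare_wirtinger
    (μ : ℤ → ℝ) (hμmono : StrictMono μ)
    (hμtop : Tendsto μ atTop atTop) (hμbot : Tendsto μ atBot atBot)
    (W : ℝ → ℝ) (hW : Measurable W) (hWnn : ∀ ξ, 0 ≤ W ξ)
    (g : ℝ → ℝ) (hg : ContDiff ℝ 1 g)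
    (hgL2 : MemLp g 2 (volume : Measure ℝ))
    (hgzero : ∀ j : ℤ, g (μ j) = 0)
    (w : ℤ → ℝ) (hwnn : ∀ j, 0 ≤ w j)
    (hWle : ∀ j : ℤ, ∀ ξ ∈ Icc (μ j) (μ (j + 1)), W ξ ≤ w j)
    (hgapw : ∀ j : ℤ, Real.sqrt (w j) * (μ (j + 1) - μ j) ≤ 1 / 2)
    (hint : Integrable (fun ξ : ℝ => (deriv g ξ) ^ 2)) :
    ∫ ξ : ℝ, W ξ * (g ξ) ^ 2 ≤ (1 / (2 * Real.pi)) ^ 2 * ∫ ξ : ℝ, (deriv g ξ) ^ 2 := by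
  classical
  set C : ℝ := (1 / (2 * Real.pi)) ^ 2 with hCdef
  have hCnn : 0 ≤ C := sq_nonneg _
  have hgc : Continuous g := hg.continuous
  have hg'c : Continuous (deriv g) := hg.continuous_deriv le_rfl
  -- the intervals cover ℝ
  have hcover : ∀ x : ℝ, ∃ j : ℤ, x ∈ Ioc (μ j) (μ (j + 1)) := by
    intro x
    have Hbdd : ∃ b : ℤ, ∀ z : ℤ, μ z < x → z ≤ b := by
      obtain ⟨N, hN⟩ := (hμtop.eventually_ge_atTop x).exists_forall_of_atTop
      exact ⟨N, fun z hz => by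
        by_contra hzN
        exact absurd (hN z (le_of_not_ge hzN)) (not_le.mpr hz)⟩
    have Hinh : ∃ z : ℤ, μ z < x := by
      obtain ⟨M, hM⟩ := (hμbot.eventually_le_atBot (x - 1)).exists_forall_of_atBot
      exact ⟨M, by linarith [hM M le_rfl]⟩
    obtain ⟨j, hj, hjmax⟩ := Int.exists_greatest_of_bdd Hbdd Hinh
    refine ⟨j, hj, ?_⟩
    by_contra hcon
    exact absurd (hjmax (j + 1) (not_le.mp hcon)) (by omega)
  set S : ℤ → Set ℝ := fun j => Ioc (μ j) (μ (j + 1)) with hSdef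
  have hSmeas : ∀ j, MeasurableSet (S j) := fun j => measurableSet_Ioc
  have hSdisj : Pairwise (Function.onFun Disjoint S) := by
    intro i j hij
    rw [Function.onFun, hSdef]
    rw [Set.Ioc_disjoint_Ioc]
    rcases lt_or_gt_of_ne hij with h | h
    · exact le_max_of_le_right ((min_le_left _ _).trans (hμmono.monotone (by omega)))
    · exact le_max_of_le_left ((min_le_right _ _).trans (hμmono.monotone (by omega)))
  have hSunion : (⋃ j, S j) = univ := eq_univ_of_forall fun x => mem_iUnion.mpr (hcover x)
  -- per-interval estimate in ℝ≥0∞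
  have hkey : ∀ j : ℤ, ∫⁻ ξ in S j, ENNReal.ofReal (W ξ * g ξ ^ 2)
      ≤ ENNReal.ofReal C * ∫⁻ ξ in S j, ENNReal.ofReal (deriv g ξ ^ 2) := by
    intro j
    have hj1 : μ j < μ (j + 1) := hμmono (by omega)
    set Δ : ℝ := μ (j + 1) - μ j with hΔdef
    have hΔnn : 0 ≤ Δ := by simp only [hΔdef]; linarith
    -- Wirtinger on this interval
    have hwir := wirtinger_interval hj1 hg (hgzero j) (hgzero (j + 1))
    -- arithmetic : w j * (Δ / π)^2 ≤ C
    have harith : w j * (Δ / Real.pi) ^ 2 ≤ C := by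
      have h1 := hgapw j
      have h2 : Real.sqrt (w j) ^ 2 = w j := Real.sq_sqrt (hwnn j)
      have h3 : 0 ≤ Real.sqrt (w j) := Real.sqrt_nonneg _
      rw [← hΔdef] at h1
      have h5 : 0 ≤ Real.sqrt (w j) * Δ := mul_nonneg h3 hΔnn
      have h6 : (Real.sqrt (w j) * Δ) ^ 2 ≤ ((1:ℝ)/2) ^ 2 := by
        exact pow_le_pow_left₀ h5 h1 2
      rw [mul_pow, h2] at h6
      have h4 : w j * Δ ^ 2 ≤ 1 / 4 := by nlinarith
      have hπ : (0:ℝ) < Real.pi := Real.pi_pos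
      have hre : w j * (Δ / Real.pi) ^ 2 = (w j * Δ ^ 2) * (1 / Real.pi ^ 2) := by
        rw [div_pow]; ring
      rw [hre]
      calc (w j * Δ ^ 2) * (1 / Real.pi ^ 2) ≤ (1 / 4) * (1 / Real.pi ^ 2) :=
            mul_le_mul_of_nonneg_right h4 (by positivity)
        _ = C := by rw [hCdef]; field_simp; ring
    -- lintegral identities
    have e1 : ∫⁻ ξ in S j, ENNReal.ofReal (g ξ ^ 2)
        = ENNReal.ofReal (∫ x in (μ j)..(μ (j + 1)), g x ^ 2) := by
      rw [intervalIntegral.integral_of_le hj1.le,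
        MeasureTheory.ofReal_integral_eq_lintegral_ofReal (f := fun x => g x ^ 2)
          (((by fun_prop : Continuous fun x => g x ^ 2)).integrableOn_Ioc.mono_set (subset_refl _))
          (Filter.Eventually.of_forall fun x => sq_nonneg _)]
    have e2 : ∫⁻ ξ in S j, ENNReal.ofReal (deriv g ξ ^ 2)
        = ENNReal.ofReal (∫ x in (μ j)..(μ (j + 1)), deriv g x ^ 2) := by
      rw [intervalIntegral.integral_of_le hj1.le,
        MeasureTheory.ofReal_integral_eq_lintegral_ofReal (f := fun x => deriv g x ^ 2)
          (((by fun_prop : Continuous fun x => deriv g x ^ 2)).integrableOn_Ioc.mono_set (subset_refl _))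
          (Filter.Eventually.of_forall fun x => sq_nonneg _)]
    have hIg' : 0 ≤ ∫ x in (μ j)..(μ (j + 1)), deriv g x ^ 2 :=
      intervalIntegral.integral_nonneg hj1.le fun x _ => sq_nonneg _
    calc ∫⁻ ξ in S j, ENNReal.ofReal (W ξ * g ξ ^ 2)
        ≤ ∫⁻ ξ in S j, ENNReal.ofReal (w j) * ENNReal.ofReal (g ξ ^ 2) := by
          refine setLIntegral_mono' (hSmeas j) fun x hx => ?_
          rw [← ENNReal.ofReal_mul (hwnn j)]
          exact ENNReal.ofReal_le_ofReal
            (mul_le_mul_of_nonneg_right (hWle j x (Ioc_subset_Icc_self hx)) (sq_nonneg _))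
      _ = ENNReal.ofReal (w j) * ∫⁻ ξ in S j, ENNReal.ofReal (g ξ ^ 2) :=
          lintegral_const_mul' _ _ ENNReal.ofReal_ne_top
      _ = ENNReal.ofReal (w j) * ENNReal.ofReal (∫ x in (μ j)..(μ (j + 1)), g x ^ 2) := by
          rw [e1]
      _ ≤ ENNReal.ofReal (w j)
          * ENNReal.ofReal ((Δ / Real.pi) ^ 2 * ∫ x in (μ j)..(μ (j + 1)), deriv g x ^ 2) :=
          mul_le_mul_right (ENNReal.ofReal_le_ofReal hwir) _
      _ = ENNReal.ofReal (w j * (Δ / Real.pi) ^ 2 * ∫ x in (μ j)..(μ (j + 1)), deriv g x ^ 2) := by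
          rw [← ENNReal.ofReal_mul (hwnn j), mul_assoc]
      _ ≤ ENNReal.ofReal (C * ∫ x in (μ j)..(μ (j + 1)), deriv g x ^ 2) :=
          ENNReal.ofReal_le_ofReal (mul_le_mul_of_nonneg_right harith hIg')
      _ = ENNReal.ofReal C * ENNReal.ofReal (∫ x in (μ j)..(μ (j + 1)), deriv g x ^ 2) :=
          ENNReal.ofReal_mul hCnn
      _ = ENNReal.ofReal C * ∫⁻ ξ in S j, ENNReal.ofReal (deriv g ξ ^ 2) := by rw [e2]
  -- global lintegral estimate
  have hdecompW : ∫⁻ ξ, ENNReal.ofReal (W ξ * g ξ ^ 2)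
      = ∑' j : ℤ, ∫⁻ ξ in S j, ENNReal.ofReal (W ξ * g ξ ^ 2) := by
    rw [← lintegral_iUnion hSmeas hSdisj, hSunion, Measure.restrict_univ]
  have hdecompg' : ∫⁻ ξ, ENNReal.ofReal (deriv g ξ ^ 2)
      = ∑' j : ℤ, ∫⁻ ξ in S j, ENNReal.ofReal (deriv g ξ ^ 2) := by
    rw [← lintegral_iUnion hSmeas hSdisj, hSunion, Measure.restrict_univ]
  have hmain : ∫⁻ ξ, ENNReal.ofReal (W ξ * g ξ ^ 2)
      ≤ ENNReal.ofReal C * ∫⁻ ξ, ENNReal.ofReal (deriv g ξ ^ 2) := by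
    rw [hdecompW, hdecompg', ← ENNReal.tsum_mul_left]
    exact ENNReal.tsum_le_tsum hkey
  -- convert back to Bochner integrals
  have hg'lint : ∫⁻ ξ, ENNReal.ofReal (deriv g ξ ^ 2)
      = ENNReal.ofReal (∫ ξ, deriv g ξ ^ 2) :=
    (MeasureTheory.ofReal_integral_eq_lintegral_ofReal hint
      (Filter.Eventually.of_forall fun x => sq_nonneg _)).symm
  have hWg2meas : Measurable fun ξ => W ξ * g ξ ^ 2 :=
    hW.mul ((hgc.measurable).pow_const 2)
  have hWgnn : 0 ≤ᵐ[volume] fun ξ => W ξ * g ξ ^ 2 :=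
    Filter.Eventually.of_forall fun x => mul_nonneg (hWnn x) (sq_nonneg _)
  have hWgint : Integrable (fun ξ => W ξ * g ξ ^ 2) := by
    refine ⟨hWg2meas.aestronglyMeasurable, ?_⟩
    rw [hasFiniteIntegral_iff_ofReal hWgnn]
    refine hmain.trans_lt ?_
    rw [hg'lint]
    exact ENNReal.mul_lt_top ENNReal.ofReal_lt_top ENNReal.ofReal_lt_top
  have hfinal : ENNReal.ofReal (∫ ξ, W ξ * g ξ ^ 2)
      ≤ ENNReal.ofReal (C * ∫ ξ, deriv g ξ ^ 2) := by
    rw [MeasureTheory.ofReal_integral_eq_lintegral_ofReal hWgint hWgnn,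
      ENNReal.ofReal_mul hCnn, ← hg'lint]
    exact hmain
  have hRnn : 0 ≤ C * ∫ ξ, deriv g ξ ^ 2 :=
    mul_nonneg hCnn (integral_nonneg fun x => sq_nonneg _)
  exact (ENNReal.ofReal_le_ofReal_iff hRnn).mp hfinal
end
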